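/- arXiv:2001.00407 — 5 statements merged into one kernel-verified Lean document; each statement's English description precedes it below -/
import Mathlib

section
/- For any integer k ≥ 2 and any c₂ > 0, there is some θ > 0 such that if a red/blue coloring of the edges of K_N is θ-quasirandom (for any N), then the number of monochromatic copies of K_k having at least (2^{−k} + c₂)N monochromatic extensions to a monochromatic K_{k+1} is at most c₂·N^k. -/
/-- `S` spans a monochromatic clique of color `c` in the edge coloring `χ`. -/
def IsMonoOn {N : ℕ} (χ : Fin N → Fin N → Bool) (S : Finset (Fin N)) (c : Bool) : Prop :=
  ∀ u ∈ S, ∀ v ∈ S, u ≠ v → χ u v = c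

/-- Number of pairs of distinct vertices in `X × Y` joined by an edge of color `c`. -/
noncomputable def colorCount {N : ℕ} (χ : Fin N → Fin N → Bool) (c : Bool)
    (X Y : Finset (Fin N)) : ℕ :=
  {p : Fin N × Fin N | p.1 ∈ X ∧ p.2 ∈ Y ∧ p.1 ≠ p.2 ∧ χ p.1 p.2 = c}.ncard

/-- A red/blue edge coloring of `K_N` is `θ`-quasirandom if, for every pair of disjoint
vertex subsets `X`, `Y`, the number of blue edges between them deviates from `|X||Y|/2`
by at most `θ N²`. -/
def Quasirandom {N : ℕ} (χ : Fin N → Fin N → Bool) (θ : ℝ) : Prop :=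
  ∀ X Y : Finset (Fin N), Disjoint X Y →
    |(colorCount χ true X Y : ℝ) - (X.card : ℝ) * (Y.card : ℝ) / 2| ≤ θ * (N : ℝ) ^ 2

/-- Number of monochromatic extensions of the clique `S` of color `c`. -/
noncomputable def monoExtCount {N : ℕ} (χ : Fin N → Fin N → Bool) (S : Finset (Fin N))
    (c : Bool) : ℕ :=
  {v : Fin N | v ∉ S ∧ ∀ u ∈ S, χ v u = c}.ncard

/-!
Write a `K_k` with many extensions as a tuple `f` and follow the common neighbourhoods
`W₀ ⊇ W₁ ⊇ ⋯ ⊇ W_k` of its prefixes (`commonNbr`). If `|W_k| > (1/2 + ε)^k N`, some step keeps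
more than a `(1/2 + ε)`-fraction: `f i` has more than `(1/2 + ε)|W_i|` neighbours in `W_i`, a set of
size at least `(1/2 + ε)^k N` that depends only on `f 0, …, f (i-1)`. In a `θ`-quasirandom colouring
every such set has only `O(θ N)` of these heavy vertices, so at most `k N^(k-1) · O(θ N)` tuples
are bad, which is below `c₂ N^k / 2` per colour once `θ` is small.
-/

open Finset Topology

variable {N : ℕ}

def colorNbr (χ : Fin N → Fin N → Bool) (c : Bool) (w : Fin N) : Finset (Fin N) :=
  {v | v ≠ w ∧ χ v w = c}

theorem colorCount_eq_card_filter (χ : Fin N → Fin N → Bool) (c : Bool)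
    (X Y : Finset (Fin N)) :
    colorCount χ c X Y = #{p ∈ X ×ˢ Y | p.1 ≠ p.2 ∧ χ p.1 p.2 = c} := by
  rw [colorCount, ← Set.ncard_coe_finset]
  congr 1
  ext p
  simp [and_assoc]

theorem colorCount_eq_sum_card_inter (χ : Fin N → Fin N → Bool) (c : Bool)
    (X Y : Finset (Fin N)) :
    colorCount χ c X Y = ∑ w ∈ Y, #(X ∩ colorNbr χ c w) := by
  rw [colorCount_eq_card_filter, card_filter, sum_product_right]
  refine sum_congr rfl fun w _ => ?_
  rw [← card_filter, colorNbr, ← filter_mem_eq_inter]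
  simp

theorem colorCount_true_add_false (χ : Fin N → Fin N → Bool) {X Y : Finset (Fin N)}
    (hXY : Disjoint X Y) :
    colorCount χ true X Y + colorCount χ false X Y = #X * #Y := by
  have hne : ∀ c,
      #{p ∈ X ×ˢ Y | p.1 ≠ p.2 ∧ χ p.1 p.2 = c} = #{p ∈ X ×ˢ Y | χ p.1 p.2 = c} :=
    fun c => congrArg card <| filter_congr fun p hp => by
      obtain ⟨hx, hy⟩ := mem_product.1 hp
      have hne : p.1 ≠ p.2 := fun h => disjoint_left.1 hXY hx (h ▸ hy)
      simp [hne]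
  rw [colorCount_eq_card_filter, colorCount_eq_card_filter, hne, hne, ← card_product]
  simpa using card_filter_add_card_filter_not (s := X ×ˢ Y) (fun p => χ p.1 p.2 = true)

noncomputable def heavyVertices (χ : Fin N → Fin N → Bool) (c : Bool) (ε : ℝ)
    (U : Finset (Fin N)) : Finset (Fin N) :=
  {w | (1 / 2 + ε) * #U < #(U ∩ colorNbr χ c w)}

namespace Quasirandom

variable {χ : Fin N → Fin N → Bool} {θ : ℝ}

theorem colorCount_le (hq : Quasirandom χ θ) (c : Bool) {X Y : Finset (Fin N)}
    (hXY : Disjoint X Y) : (colorCount χ c X Y : ℝ) ≤ #X * #Y / 2 + θ * N ^ 2 := by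
  have hsum : (colorCount χ true X Y : ℝ) + colorCount χ false X Y = #X * #Y := by
    exact_mod_cast colorCount_true_add_false χ hXY
  have := abs_le.1 (hq X Y hXY)
  cases c <;> linarith

theorem one_le_two_mul_sq (hq : Quasirandom χ θ) (hN : 2 ≤ N) : 1 ≤ 2 * θ * N ^ 2 := by
  let x : Fin N := ⟨0, by omega⟩
  let y : Fin N := ⟨1, by omega⟩
  have hxy : Disjoint {x} {y} := disjoint_singleton.2 (by simp [x, y, Fin.ext_iff])
  have hle : colorCount χ true {x} {y} ≤ 1 := by
    have := colorCount_true_add_false χ hxy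
    simp only [card_singleton] at this
    omega
  have h := hq {x} {y} hxy
  interval_cases colorCount χ true {x} {y} <;> norm_num [abs_of_nonneg, abs_of_nonpos] at h <;>
    linarith

variable {c : Bool} {ε : ℝ} {U X : Finset (Fin N)}

theorem card_mul_sub_card_le (hq : Quasirandom χ θ) (hX : X ⊆ heavyVertices χ c ε U) :
    #X * (ε * #U - #X) ≤ θ * N ^ 2 := by
  have hdeg : ∀ w ∈ X, (1 / 2 + ε) * #U - #X ≤ (#((U \ X) ∩ colorNbr χ c w) : ℝ) := by
    intro w hw
    have hsplit : U ∩ colorNbr χ c w ⊆ (U \ X) ∩ colorNbr χ c w ∪ X := by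
      intro v hv
      by_cases hvX : v ∈ X <;> simp_all
    have hle : (#(U ∩ colorNbr χ c w) : ℝ) ≤ #((U \ X) ∩ colorNbr χ c w) + #X := by
      exact_mod_cast (card_le_card hsplit).trans (card_union_le _ _)
    have hw' : (1 / 2 + ε) * #U < #(U ∩ colorNbr χ c w) := (mem_filter.1 (hX hw)).2
    linarith
  have hedges : #X * ((1 / 2 + ε) * #U - #X) ≤ (colorCount χ c (U \ X) X : ℝ) := by
    rw [colorCount_eq_sum_card_inter]
    push_cast
    simpa using card_nsmul_le_sum X _ _ hdeg
  have hupper := hq.colorCount_le c (sdiff_disjoint : Disjoint (U \ X) X)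
  have hsub : (#(U \ X) : ℝ) ≤ #U := by exact_mod_cast card_le_card sdiff_subset
  nlinarith [mul_le_mul_of_nonneg_right hsub (Nat.cast_nonneg (α := ℝ) #X)]

theorem card_heavyVertices_mul_le (hq : Quasirandom χ θ) (hU : 4 ≤ ε * #U)
    (hθ : 64 * θ * N ^ 2 ≤ (ε * #U) ^ 2) :
    #(heavyVertices χ c ε U) * (ε * #U) ≤ 2 * θ * N ^ 2 := by
  set H := heavyVertices χ c ε U
  set u := ε * #U
  have hsmall : ∀ X ⊆ H, (#X : ℝ) ≤ u / 2 → #X * u ≤ 2 * θ * N ^ 2 := by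
    intro X hX hXu
    nlinarith [hq.card_mul_sub_card_le hX]
  -- Heavy vertices may lie in `U`, so only sets `X ⊆ H` with `|X| ≤ u / 2` can be compared
  -- with `U \ X`; one of size `⌊u / 2⌋` already violates the bound, so `H` is smaller.
  have hHu : #H ≤ ⌊u / 2⌋₊ := by
    by_contra! hlt
    obtain ⟨X, hXH, hX⟩ := exists_subset_card_eq hlt.le
    have := hsmall X hXH (hX ▸ Nat.floor_le (by linarith))
    have hfloor : u / 2 < ⌊u / 2⌋₊ + 1 := Nat.lt_floor_add_one _
    rw [hX] at this
    nlinarith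
  exact hsmall H subset_rfl ((Nat.cast_le.2 hHu).trans (Nat.floor_le (by linarith)))

theorem card_heavyVertices_le (hq : Quasirandom χ θ) {ρ : ℝ} (hε : 0 < ε) (hρ : 0 < ρ)
    (hθ : 64 * θ ≤ (ε * ρ) ^ 2) (hN : 4 ≤ ε * ρ * N) (hU : ρ * N ≤ #U) :
    (#(heavyVertices χ c ε U) : ℝ) ≤ 2 * θ * N / (ε * ρ) := by
  have hεU : ε * ρ * N ≤ ε * #U := by nlinarith
  have hmul := hq.card_heavyVertices_mul_le (c := c) (hN.trans hεU) (by nlinarith)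
  have hNpos : (0 : ℝ) < N := by nlinarith [mul_pos hε hρ]
  rw [le_div_iff₀ (by positivity)]
  nlinarith [Nat.cast_nonneg (α := ℝ) #(heavyVertices χ c ε U)]

end Quasirandom

theorem card_le_pow_mul_of_card_fiber_le {ι α : Type*} [Fintype ι] [DecidableEq ι] [Fintype α]
    [DecidableEq α] (s : Finset (ι → α)) (i : ι) {M : ℝ} (hM : 0 ≤ M)
    (hfiber : ∀ t ⊆ s, ∀ f : ι → α, (∀ g ∈ t, ∀ j ≠ i, g j = f j) → (#t : ℝ) ≤ M) :
    (#s : ℝ) ≤ Fintype.card α ^ (Fintype.card ι - 1) * M := by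
  let restrict : (ι → α) → ({j // j ≠ i} → α) := fun f j => f j
  rw [card_eq_sum_card_fiberwise (f := restrict) (t := univ) (fun _ _ => mem_coe.2 (mem_univ _))]
  have hcard : Fintype.card ({j // j ≠ i} → α) = Fintype.card α ^ (Fintype.card ι - 1) := by
    simp [Fintype.card_subtype_compl]
  push_cast
  rw [← Nat.cast_pow, ← hcard, ← card_univ, ← nsmul_eq_mul]
  refine sum_le_card_nsmul _ _ _ fun g _ => ?_
  obtain ⟨f, hf⟩ | hempty := (filter (fun f => restrict f = g) s).eq_empty_or_nonempty.symm
  · obtain ⟨-, rfl⟩ := mem_filter.1 hf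
    refine hfiber _ (filter_subset _ _) f fun g hg j hj => ?_
    exact congrFun (mem_filter.1 hg).2 ⟨j, hj⟩
  · simp [hempty, hM]

section Tuples

variable {k : ℕ} (χ : Fin N → Fin N → Bool) (c : Bool)

def commonNbr (f : Fin k → Fin N) (i : ℕ) : Finset (Fin N) :=
  {v | ∀ j : Fin k, (j : ℕ) < i → v ≠ f j ∧ χ v (f j) = c}

theorem commonNbr_zero (f : Fin k → Fin N) : commonNbr χ c f 0 = univ := by
  simp [commonNbr]

theorem commonNbr_succ (f : Fin k → Fin N) (i : Fin k) :
    commonNbr χ c f (i + 1) = commonNbr χ c f i ∩ colorNbr χ c (f i) := by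
  ext v
  simp only [commonNbr, colorNbr, mem_filter, mem_inter, mem_univ, true_and,
    Nat.lt_succ_iff_lt_or_eq, or_imp, forall_and, Fin.val_inj, forall_eq]
  tauto

theorem commonNbr_antitone (f : Fin k → Fin N) : Antitone (commonNbr χ c f) :=
  fun _ _ hii' _ hv => mem_filter.2 ⟨mem_univ _, fun j hj => (mem_filter.1 hv).2 j (by omega)⟩

theorem commonNbr_congr {f g : Fin k → Fin N} {i : ℕ}
    (hfg : ∀ j : Fin k, (j : ℕ) < i → f j = g j) : commonNbr χ c f i = commonNbr χ c g i := by
  ext v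
  simp +contextual only [commonNbr, mem_filter, mem_univ, true_and, hfg]

theorem monoExtCount_image (f : Fin k → Fin N) :
    monoExtCount χ (univ.image f) c = #(commonNbr χ c f k) := by
  rw [monoExtCount, ← Set.ncard_coe_finset]
  congr 1
  ext v
  simp [commonNbr, forall_and, eq_comm]

theorem exists_heavy_step {ε : ℝ} (hε : 0 ≤ ε) {f : Fin k → Fin N}
    (h : (1 / 2 + ε) ^ k * N < #(commonNbr χ c f k)) :
    ∃ i : Fin k, (1 / 2 + ε) ^ k * N < #(commonNbr χ c f i) ∧
      f i ∈ heavyVertices χ c ε (commonNbr χ c f i) := by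
  obtain ⟨i, hik, hi⟩ : ∃ i < k,
      (1 / 2 + ε) * #(commonNbr χ c f i) < (#(commonNbr χ c f (i + 1)) : ℝ) := by
    by_contra! hsteps
    have := le_geom (u := fun i => (#(commonNbr χ c f i) : ℝ)) (by linarith) k hsteps
    simp only [commonNbr_zero, card_univ, Fintype.card_fin] at this
    linarith
  have hmono := card_le_card (commonNbr_antitone χ c f hik.le)
  refine ⟨⟨i, hik⟩, h.trans_le (by exact_mod_cast hmono), mem_filter.2 ⟨mem_univ _, ?_⟩⟩
  rwa [← commonNbr_succ]

theorem card_tuples_le_of_card_heavyVertices_le {ε M t : ℝ} (hε : 0 ≤ ε) (hM0 : 0 ≤ M)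
    (ht : (1 / 2 + ε) ^ k * N < t)
    (hM : ∀ U : Finset (Fin N), (1 / 2 + ε) ^ k * N < #U →
      (#(heavyVertices χ c ε U) : ℝ) ≤ M) :
    (#{f : Fin k → Fin N | t ≤ #(commonNbr χ c f k)} : ℝ) ≤ k * (N ^ (k - 1) * M) := by
  let A (i : Fin k) : Finset (Fin k → Fin N) :=
    {f | (1 / 2 + ε) ^ k * N < #(commonNbr χ c f i) ∧
      f i ∈ heavyVertices χ c ε (commonNbr χ c f i)}
  have hcover :
      ({f | t ≤ #(commonNbr χ c f k)} : Finset (Fin k → Fin N)) ⊆ univ.biUnion A := by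
    intro f hf
    obtain ⟨i, hi⟩ := exists_heavy_step χ c hε (ht.trans_le (mem_filter.1 hf).2)
    exact mem_biUnion.2 ⟨i, mem_univ _, mem_filter.2 ⟨mem_univ _, hi⟩⟩
  have hA : ∀ i, (#(A i) : ℝ) ≤ N ^ (k - 1) * M := by
    intro i
    refine (card_le_pow_mul_of_card_fiber_le (A i) i hM0 fun T hT f hf => ?_).trans_eq (by simp)
    obtain rfl | ⟨g₀, hg₀⟩ := T.eq_empty_or_nonempty
    · simpa using hM0
    have hsame : ∀ g ∈ T, commonNbr χ c g i = commonNbr χ c f i :=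
      fun g hg => commonNbr_congr χ c fun j hj => hf g hg j (Fin.ne_of_lt hj)
    have hU := (mem_filter.1 (hT hg₀)).2.1
    rw [hsame g₀ hg₀] at hU
    refine le_trans (Nat.cast_le.2 (card_le_card_of_injOn (· i) (fun g hg => ?_) ?_)) (hM _ hU)
    · have := (mem_filter.1 (hT hg)).2.2
      rwa [hsame g hg] at this
    · intro g hg g' hg' hgg'
      funext j
      by_cases hj : j = i
      · exact hj ▸ hgg'
      · rw [hf g hg j hj, hf g' hg' j hj]
  calc (#{f : Fin k → Fin N | t ≤ #(commonNbr χ c f k)} : ℝ)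
      ≤ ∑ i, (#(A i) : ℝ) := by exact_mod_cast (card_le_card hcover).trans card_biUnion_le
    _ ≤ k * (N ^ (k - 1) * M) := (sum_le_sum fun i _ => hA i).trans_eq (by simp)

theorem card_bigBooks_le_card_tuples (t : ℝ) :
    #{S : Finset (Fin N) | #S = k ∧ t ≤ monoExtCount χ S c} ≤
      #{f : Fin k → Fin N | t ≤ #(commonNbr χ c f k)} := by
  refine le_trans (card_le_card fun S hS => ?_) (card_image_le (f := fun f => univ.image f))
  obtain ⟨hSk, hS⟩ := (mem_filter.1 hS).2
  refine mem_image.2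
    ⟨S.orderEmbOfFin hSk, mem_filter.2 ⟨mem_univ _, ?_⟩, image_orderEmbOfFin_univ S hSk⟩
  rwa [← monoExtCount_image, image_orderEmbOfFin_univ]

end Tuples

theorem ncard_bigBooks_le_sum_card_tuples {k : ℕ} (χ : Fin N → Fin N → Bool) (t : ℝ) :
    ({p : Finset (Fin N) × Bool | p.1.card = k ∧ IsMonoOn χ p.1 p.2 ∧
      t ≤ (monoExtCount χ p.1 p.2 : ℝ)}.ncard : ℝ) ≤
      ∑ c : Bool, (#{f : Fin k → Fin N | t ≤ #(commonNbr χ c f k)} : ℝ) := by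
  let books : Finset (Finset (Fin N) × Bool) := {p | #p.1 = k ∧ t ≤ monoExtCount χ p.1 p.2}
  have hsplit : #books = ∑ c : Bool, #{S : Finset (Fin N) | #S = k ∧ t ≤ monoExtCount χ S c} := by
    simp only [books, card_filter, Fintype.sum_prod_type_right]
  calc _ ≤ (#books : ℝ) := by
        refine Nat.cast_le.2 ((Set.ncard_le_ncard fun p hp => ?_).trans (Set.ncard_coe_finset _).le)
        simp_all [books]
    _ ≤ _ := by
        rw [hsplit]
        push_cast
        gcongr with c
        exact_mod_cast card_bigBooks_le_card_tuples χ c t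

theorem Quasirandom.ncard_bigBooks_le {k : ℕ} {χ : Fin N → Fin N → Bool} {θ ε s : ℝ}
    (hq : Quasirandom χ θ) (hk : 2 ≤ k) (hθ0 : 0 ≤ θ) (hε : 0 < ε)
    (hθ : 64 * θ ≤ (ε * (1 / 2 + ε) ^ k) ^ 2) (hs : (1 / 2 + ε) ^ k < s) :
    ({p : Finset (Fin N) × Bool | p.1.card = k ∧ IsMonoOn χ p.1 p.2 ∧
      s * N ≤ (monoExtCount χ p.1 p.2 : ℝ)}.ncard : ℝ) ≤
      4 * k * θ / (ε * (1 / 2 + ε) ^ k) * N ^ k := by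
  set ρ := (1 / 2 + ε) ^ k
  have hρ : 0 < ρ := by positivity
  rcases lt_or_ge N 2 with hN | hN
  · convert (by positivity : (0 : ℝ) ≤ 4 * k * θ / (ε * ρ) * N ^ k)
    rw [Nat.cast_eq_zero, Set.ncard_eq_zero]
    refine Set.eq_empty_of_forall_notMem fun p hp => ?_
    have hcard := p.1.card_le_univ
    rw [Fintype.card_fin, hp.1] at hcard
    omega
  have hN4 : 4 ≤ ε * ρ * N := by
    have hsq : 32 ≤ (ε * ρ * N) ^ 2 := by nlinarith [hq.one_le_two_mul_sq hN]
    nlinarith [mul_nonneg (mul_pos hε hρ).le (Nat.cast_nonneg (α := ℝ) N)]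
  have hNpos : (0 : ℝ) < N := by positivity
  calc _ ≤ ∑ c : Bool, (#{f : Fin k → Fin N | s * N ≤ #(commonNbr χ c f k)} : ℝ) :=
        ncard_bigBooks_le_sum_card_tuples χ _
    _ ≤ ∑ c : Bool, k * (N ^ (k - 1) * (2 * θ * N / (ε * ρ))) := by
        gcongr with c
        exact card_tuples_le_of_card_heavyVertices_le χ c hε.le (by positivity)
          (by gcongr) fun U hU => hq.card_heavyVertices_le hε hρ hθ hN4 hU.le
    _ = 4 * k * θ / (ε * ρ) * N ^ k := by
        rw [← Nat.sub_add_cancel (by omega : 1 ≤ k), pow_succ, Fintype.sum_bool]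
        push_cast
        ring

theorem exists_pos_add_pow_lt (a : ℝ) (k : ℕ) {c : ℝ} (hc : 0 < c) :
    ∃ ε > 0, (a + ε) ^ k < a ^ k + c := by
  have hnear : ∀ᶠ x in 𝓝[>] a, x ^ k < a ^ k + c :=
    nhdsWithin_le_nhds <| (continuous_pow k).continuousAt.eventually_lt continuousAt_const
      (by linarith)
  obtain ⟨x, hx, hax⟩ := (hnear.and self_mem_nhdsWithin).exists
  exact ⟨x - a, sub_pos.2 hax, by simpa using hx⟩

/-- In a sufficiently quasirandom coloring, at most `c₂ N^k` monochromatic `K_k` have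
at least `(2^{-k} + c₂)N` monochromatic extensions. -/
theorem few_big_books_of_quasirandom (k : ℕ) (hk : 2 ≤ k) (c₂ : ℝ) (hc₂ : 0 < c₂) :
    ∃ θ : ℝ, 0 < θ ∧
      ∀ (N : ℕ) (χ : Fin N → Fin N → Bool), (∀ u v, χ u v = χ v u) →
        Quasirandom χ θ →
        (({p : Finset (Fin N) × Bool | p.1.card = k ∧ IsMonoOn χ p.1 p.2 ∧
            (((2 : ℝ) ^ k)⁻¹ + c₂) * N ≤ (monoExtCount χ p.1 p.2 : ℝ)}.ncard : ℝ))
          ≤ c₂ * (N : ℝ) ^ k := by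
  obtain ⟨ε, hε, hεk⟩ := exists_pos_add_pow_lt (1 / 2) k hc₂
  rw [one_div_pow, one_div ((2 : ℝ) ^ k)] at hεk
  set ρ := (1 / 2 + ε) ^ k
  have hρ : 0 < ρ := by positivity
  -- The first term makes the heavy-vertex bound applicable, the second makes it small enough.
  set θ := min ((ε * ρ) ^ 2 / 64) (c₂ * (ε * ρ) / (4 * k))
  have hθ : 64 * θ ≤ (ε * ρ) ^ 2 := by
    linarith [min_le_left ((ε * ρ) ^ 2 / 64) (c₂ * (ε * ρ) / (4 * k))]
  have hθc : 4 * k * θ ≤ c₂ * (ε * ρ) := by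
    have := min_le_right ((ε * ρ) ^ 2 / 64) (c₂ * (ε * ρ) / (4 * k))
    rwa [le_div_iff₀ (by positivity), mul_comm] at this
  refine ⟨θ, by positivity, fun N χ _ hq => ?_⟩
  calc _ ≤ 4 * k * θ / (ε * ρ) * N ^ k := hq.ncard_bigBooks_le hk (by positivity) hε hθ hεk
    _ ≤ c₂ * N ^ k := by
        gcongr
        rwa [div_le_iff₀ (by positivity)]
end

section
/- For any integer k ≥ 1 and any real numbers x₁, ..., x_k ∈ [0,1], one has ∏_{i=1}^k x_i + (1/k)·∑_{i=1}^k (1 − x_i)^k ≥ 2^{1−k}. -/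
/-!
With `b i = 2 * x i ∈ [0, 2]` the claim reads `∏ b i + (1/k) ∑ (2 - b i)^k ≥ 2`.

AM–GM for `∏ b i` together with the `1 / b i` (all `k + 1` numbers have product `1`) gives
`∏ b i + ∑ 1 / b i ≥ k + 1`. For `k ≥ 4` and `2/k ≤ b ≤ 2`, a third-order binomial lower bound for
`(2 - b)^k` gives `(2 - b)^k / k - 1 / b ≥ 1/k - 1`; summing this over `i` and adding settles the
case where every `b i ≥ 2/k`. If some `b i < 2/k` and `k ≥ 5`, that one term alone gives
`(2 - 2/k)^k / k ≥ 2`.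

For `k = 4` and a coordinate `a = b j ≤ 1/2`: if a second coordinate is `≤ 1/2`, two terms of the
sum suffice; otherwise AM–GM for the other three coordinates, multiplied by `a`, reduces the claim
to `(2 - a)^4 + 16 a ≥ 12`. For `k = 3` the claim is a cubic inequality that holds as soon as two of
the `b i - 1` have the same sign, which is always the case.
-/

open Finset

theorem card_add_one_le_prod_add_sum_inv {ι : Type*} (s : Finset ι) (a : ι → ℝ)
    (ha : ∀ i ∈ s, 0 < a i) :
    (#s : ℝ) + 1 ≤ ∏ i ∈ s, a i + ∑ i ∈ s, (a i)⁻¹ := by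
  set P := ∏ i ∈ s, a i
  let z : Option ι → ℝ := fun o => o.elim P fun i => (a i)⁻¹
  have hz : ∀ o ∈ s.insertNone, 0 ≤ z o := by
    rintro (_ | i) hi
    · exact (prod_pos ha).le
    · exact inv_nonneg.2 (ha i (by simpa using hi)).le
  have hn : (0 : ℝ) < #s + 1 := by positivity
  have amgm := Real.geom_mean_le_arith_mean_weighted s.insertNone (fun _ => ((#s : ℝ) + 1)⁻¹) z
    (fun _ _ => by positivity) (by simp [hn.ne']) hz
  have hprod : ∏ o ∈ s.insertNone, z o = 1 := by
    simp [z, P, prod_inv_distrib, mul_inv_cancel₀ (prod_pos ha).ne']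
  rw [Real.finsetProd_rpow _ _ hz, hprod, Real.one_rpow, ← mul_sum, sum_insertNone] at amgm
  rwa [le_inv_mul_iff₀ hn, mul_one] at amgm

theorem cubic_le_one_add_pow (n : ℕ) {z : ℝ} (hz : -1 ≤ z) :
    1 + n * z + n * (n - 1) / 2 * z ^ 2 + n * (n - 1) * (n - 2) / 6 * z ^ 3 ≤ (1 + z) ^ n := by
  induction n with
  | zero => norm_num
  | succ n ih =>
    have hcoeff : (0 : ℝ) ≤ n * (n - 1) * (n - 2) := by
      rcases n with _ | _ | n
      · simp
      · simp
      · push_cast; ring_nf; positivity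
    rw [pow_succ (1 + z) n]
    push_cast
    nlinarith [mul_le_mul_of_nonneg_right ih (neg_le_iff_add_nonneg'.1 hz),
      mul_nonneg hcoeff (pow_nonneg (sq_nonneg z) 2)]

theorem mul_two_sub_pow_add_mul_sub_nonneg {k : ℕ} (hk : 4 ≤ k) {b : ℝ} (hb₀ : 2 / k ≤ b)
    (hb₂ : b ≤ 2) :
    0 ≤ b * (2 - b) ^ k + (k - 1) * b - k := by
  have hK : (4 : ℝ) ≤ k := by exact_mod_cast hk
  have hb : 0 ≤ b := le_trans (by positivity) hb₀
  rcases le_total (k : ℝ) ((k - 1) * b) with hbig | hsmall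
  · nlinarith [mul_nonneg hb (pow_nonneg (sub_nonneg.2 hb₂) k)]
  set z := 1 - b with hz
  have hz₁ : 0 ≤ (k - 1) * z + 1 := by linarith
  have hz₂ : 0 ≤ (k - 2) - k * z := by
    have : 2 ≤ k * b := by rwa [div_le_iff₀ (by linarith), mul_comm] at hb₀
    linarith
  -- The quadratic is concave in `z` and nonnegative at the ends `-1/(k-1)`, `(k-2)/k` of the range.
  have hQ : 0 ≤ 3 * (k - 3) + (k - 1) * (k - 5) * z - (k - 1) * (k - 2) * z ^ 2 := by
    have hid : (k : ℝ) ^ 2 * (3 * (k - 3) + (k - 1) * (k - 5) * z - (k - 1) * (k - 2) * z ^ 2) =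
        k * (k - 2) * (((k - 1) * z + 1) * ((k - 2) - k * z)) + 2 * (k - 4) * (k ^ 2 - k + 1) +
          (5 * k - 4) * ((k - 2) - k * z) := by ring
    have : 0 ≤ (k : ℝ) ^ 2 *
        (3 * (k - 3) + (k - 1) * (k - 5) * z - (k - 1) * (k - 2) * z ^ 2) := by
      rw [hid]
      have h₁ : 0 ≤ k * (k - 2) * (((k - 1) * z + 1) * ((k - 2) - k * z)) :=
        mul_nonneg (by nlinarith) (mul_nonneg hz₁ hz₂)
      have h₂ : (0 : ℝ) ≤ 2 * (k - 4) * (k ^ 2 - k + 1) := mul_nonneg (by linarith) (by nlinarith)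
      have h₃ : 0 ≤ (5 * k - 4) * ((k - 2) - k * z) := mul_nonneg (by linarith) hz₂
      linarith
    exact nonneg_of_mul_nonneg_right this (by positivity)
  have hT := mul_le_mul_of_nonneg_left (cubic_le_one_add_pow k (z := z) (by linarith)) hb
  rw [show 1 + z = 2 - b by ring] at hT
  have hid : b * (1 + k * z + k * (k - 1) / 2 * z ^ 2 + k * (k - 1) * (k - 2) / 6 * z ^ 3)
      + (k - 1) * b - k =
        z ^ 2 * k * (3 * (k - 3) + (k - 1) * (k - 5) * z - (k - 1) * (k - 2) * z ^ 2) / 6 := by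
    rw [hz]; ring
  nlinarith [mul_nonneg (mul_nonneg (sq_nonneg z) (by linarith : (0:ℝ) ≤ k)) hQ]

theorem two_le_prod_add_sum_of_forall_two_div_le {k : ℕ} (hk : 4 ≤ k) (b : Fin k → ℝ)
    (hb : ∀ i, b i ∈ Set.Icc (2 / (k : ℝ)) 2) :
    2 ≤ ∏ i, b i + (1 / (k : ℝ)) * ∑ i, (2 - b i) ^ k := by
  have hK : (0 : ℝ) < k := by positivity
  have hpos : ∀ i ∈ univ, 0 < b i := fun i _ => lt_of_lt_of_le (by positivity) (hb i).1
  have hamgm := card_add_one_le_prod_add_sum_inv univ b hpos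
  rw [card_univ, Fintype.card_fin] at hamgm
  have hbracket : ∀ i ∈ univ, 0 ≤ (2 - b i) ^ k / k - (b i)⁻¹ - (1 / k - 1) := by
    intro i hi
    have h := mul_two_sub_pow_add_mul_sub_nonneg hk (hb i).1 (hb i).2
    have hbi := (hpos i hi).ne'
    have e : (2 - b i) ^ k / k - (b i)⁻¹ - (1 / k - 1) =
        (b i * (2 - b i) ^ k + (k - 1) * b i - k) / (k * b i) := by
      field_simp
      ring
    rw [e]
    exact div_nonneg h (mul_pos hK (hpos i hi)).le
  have hsum := sum_nonneg hbracket
  rw [sum_sub_distrib, sum_sub_distrib, sum_const, card_univ, Fintype.card_fin, ← sum_div,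
    nsmul_eq_mul, mul_sub, mul_one_div_cancel hK.ne', mul_one] at hsum
  rw [one_div_mul_eq_div]
  linarith

theorem two_mul_succ_pow_le {n : ℕ} (hn : 4 ≤ n) : 2 * (n + 1) ^ (n + 2) ≤ (2 * n) ^ (n + 1) := by
  induction n, hn using Nat.le_induction with
  | base => norm_num
  | succ n hn ih =>
    have key : (n + 2) ^ (n + 3) * n ^ (n + 1) ≤ 2 * (n + 1) ^ (2 * n + 4) :=
      calc (n + 2) ^ (n + 3) * n ^ (n + 1) = (n + 2) ^ 2 * ((n + 2) * n) ^ (n + 1) := by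
            rw [mul_pow]; ring
        _ ≤ 2 * (n + 1) ^ 2 * ((n + 1) ^ 2) ^ (n + 1) := by
            gcongr
            · nlinarith
            · nlinarith
        _ = 2 * (n + 1) ^ (2 * n + 4) := by rw [← pow_mul]; ring
    refine Nat.le_of_mul_le_mul_right ?_ (by positivity : 0 < n ^ (n + 1))
    calc 2 * (n + 1 + 1) ^ (n + 1 + 2) * n ^ (n + 1) = 2 * ((n + 2) ^ (n + 3) * n ^ (n + 1)) := by
          ring
      _ ≤ 2 * (2 * (n + 1) ^ (2 * n + 4)) := by gcongr
      _ = 2 * (n + 1) ^ (n + 2) * (2 * (n + 1) ^ (n + 2)) := by ring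
      _ ≤ (2 * n) ^ (n + 1) * (2 * (n + 1) ^ (n + 2)) := by gcongr
      _ = (2 * (n + 1)) ^ (n + 1 + 1) * n ^ (n + 1) := by rw [mul_pow, mul_pow]; ring

theorem two_le_prod_add_sum_of_le_two_div {k : ℕ} (hk : 5 ≤ k) (b : Fin k → ℝ)
    (hb : ∀ i, b i ∈ Set.Icc (0 : ℝ) 2) (j : Fin k) (hj : b j ≤ 2 / k) :
    2 ≤ ∏ i, b i + (1 / (k : ℝ)) * ∑ i, (2 - b i) ^ k := by
  have hK : (0 : ℝ) < k := by positivity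
  have hprod : 0 ≤ ∏ i, b i := prod_nonneg fun i _ => (hb i).1
  have hsum : (2 - b j) ^ k ≤ ∑ i, (2 - b i) ^ k :=
    single_le_sum (fun i _ => pow_nonneg (sub_nonneg.2 (hb i).2) k) (mem_univ j)
  have hthreshold : 2 * (k : ℝ) ^ (k + 1) ≤ (2 * (k - 1)) ^ k := by
    have h := two_mul_succ_pow_le (n := k - 1) (by omega)
    rw [Nat.sub_add_cancel (by omega), show k - 1 + 2 = k + 1 by omega] at h
    have hcast : ((k - 1 : ℕ) : ℝ) = k - 1 := by rw [Nat.cast_sub (by omega)]; simp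
    rw [← hcast]
    exact_mod_cast h
  have hpow : (2 * (k - 1) / k) ^ k ≤ (2 - b j) ^ k := by
    have : (1 : ℝ) ≤ k := by exact_mod_cast (by omega : 1 ≤ k)
    apply pow_le_pow_left₀ (div_nonneg (by linarith) hK.le)
    rw [div_le_iff₀ hK]
    rw [le_div_iff₀ hK] at hj
    linarith
  calc (2 : ℝ) ≤ 1 / k * (2 * (k - 1) / k) ^ k := by
        rw [div_pow, ← mul_div_assoc, one_div_mul_eq_div, div_div, ← pow_succ',
          le_div_iff₀ (by positivity)]
        exact hthreshold
    _ ≤ ∏ i, b i + 1 / k * ∑ i, (2 - b i) ^ k := by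
        have := mul_le_mul_of_nonneg_left (hpow.trans hsum) (by positivity : (0 : ℝ) ≤ 1 / k)
        linarith

theorem cubic_form_nonneg {u v w : ℝ} (huv : 0 ≤ u * v) (hu : u ≤ 1) (hv : v ≤ 1)
    (hw : w ∈ Set.Icc (-1 : ℝ) 1) :
    0 ≤ 3 * (u + v + w) ^ 2 + u ^ 2 * (3 - 2 * u) + v ^ 2 * (3 - 2 * v) + w ^ 2 * (3 - 2 * w)
      + 6 * u * v * w := by
  obtain ⟨hw₀, hw₁⟩ := hw
  nlinarith [mul_nonneg huv (neg_le_iff_add_nonneg.1 hw₀), sq_nonneg (u + v + w), sq_nonneg (u - v),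
    mul_nonneg (sq_nonneg u) (sub_nonneg.2 hu), mul_nonneg (sq_nonneg v) (sub_nonneg.2 hv),
    mul_nonneg (sq_nonneg w) (sub_nonneg.2 hw₁), sq_nonneg (2 * (u + v) - 3 * w), sq_nonneg (u + v)]

theorem two_le_prod_add_sum_fin_three (b : Fin 3 → ℝ) (hb : ∀ i, b i ∈ Set.Icc (0 : ℝ) 2) :
    2 ≤ ∏ i, b i + (1 / (3 : ℝ)) * ∑ i, (2 - b i) ^ 3 := by
  rw [Fin.prod_univ_three, Fin.sum_univ_three]
  have ht : ∀ i, b i - 1 ∈ Set.Icc (-1 : ℝ) 1 :=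
    fun i => ⟨by linarith [(hb i).1], by linarith [(hb i).2]⟩
  set u := b 0 - 1
  set v := b 1 - 1
  set w := b 2 - 1
  have hpair : 0 ≤ u * v ∨ 0 ≤ v * w ∨ 0 ≤ w * u := by
    by_contra! h
    nlinarith [mul_neg_of_pos_of_neg (mul_pos_of_neg_of_neg h.1 h.2.1) h.2.2, sq_nonneg (u * v * w)]
  rcases hpair with h | h | h
  · linarith [cubic_form_nonneg h (ht 0).2 (ht 1).2 (ht 2)]
  · linarith [cubic_form_nonneg h (ht 1).2 (ht 2).2 (ht 0)]
  · linarith [cubic_form_nonneg h (ht 2).2 (ht 0).2 (ht 1)]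

theorem mul_inv_le_two_sub_pow_four_add_third {a b : ℝ} (ha : a ∈ Set.Icc (0 : ℝ) (1 / 2))
    (hb : b ∈ Set.Icc (1 / 2 : ℝ) 2) : a * b⁻¹ ≤ (2 - b) ^ 4 / 4 + 1 / 3 := by
  obtain ⟨hb₀, hb₂⟩ := hb
  have hpos : 0 < b := by linarith
  have hpoly : 0 ≤ 3 * b * (2 - b) ^ 4 + 4 * b - 6 := by
    nlinarith [mul_nonneg (sub_nonneg.2 hb₀) (sub_nonneg.2 hb₂), sq_nonneg (b - 27 / 20),
      sq_nonneg (b - 1), sq_nonneg ((2 - b) ^ 2 - 1 / 2),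
      mul_nonneg (sub_nonneg.2 hb₀) (sq_nonneg (b - 27 / 20)),
      mul_nonneg (sub_nonneg.2 hb₂) (sq_nonneg (b - 27 / 20))]
  have e : (2 - b) ^ 4 / 4 + 1 / 3 - 1 / 2 * b⁻¹ =
      (3 * b * (2 - b) ^ 4 + 4 * b - 6) / (12 * b) := by
    field_simp
    ring
  have : 1 / 2 * b⁻¹ ≤ (2 - b) ^ 4 / 4 + 1 / 3 := by
    rw [← sub_nonneg, e]
    positivity
  exact le_trans (mul_le_mul_of_nonneg_right ha.2 (inv_nonneg.2 hpos.le)) this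

theorem two_le_prod_add_sum_fin_four_of_le_half (b : Fin 4 → ℝ)
    (hb : ∀ i, b i ∈ Set.Icc (0 : ℝ) 2) (j : Fin 4) (hj : b j ≤ 1 / 2)
    (hrest : ∀ i ∈ univ.erase j, 1 / 2 < b i) :
    2 ≤ ∏ i, b i + (1 / (4 : ℝ)) * ∑ i, (2 - b i) ^ 4 := by
  rw [← mul_prod_erase univ b (mem_univ j), ← add_sum_erase univ _ (mem_univ j)]
  have hcard : #(univ.erase j) = 3 := by simp
  have hamgm := card_add_one_le_prod_add_sum_inv (univ.erase j) b
    fun i hi => by linarith [hrest i hi]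
  have hinv : ∀ i ∈ univ.erase j, b j * (b i)⁻¹ ≤ (2 - b i) ^ 4 / 4 + 1 / 3 := fun i hi =>
    mul_inv_le_two_sub_pow_four_add_third ⟨(hb j).1, hj⟩ ⟨(hrest i hi).le, (hb i).2⟩
  have hsum := sum_le_sum hinv
  rw [← mul_sum, sum_add_distrib, ← sum_div, sum_const, hcard, nsmul_eq_mul] at hsum
  rw [hcard] at hamgm
  have hprod := mul_le_mul_of_nonneg_left hamgm (hb j).1
  have hquartic : 0 ≤ (2 - b j) ^ 4 + 16 * b j - 12 := by
    nlinarith [sq_nonneg ((2 - b j) ^ 2 - 2), sq_nonneg (b j)]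
  push_cast at hsum hprod
  linarith

theorem two_le_prod_add_sum_fin_four_of_two_le_half (b : Fin 4 → ℝ)
    (hb : ∀ i, b i ∈ Set.Icc (0 : ℝ) 2) {i j : Fin 4} (hij : i ≠ j)
    (hi : b i ≤ 1 / 2) (hj : b j ≤ 1 / 2) :
    2 ≤ ∏ i, b i + (1 / (4 : ℝ)) * ∑ i, (2 - b i) ^ 4 := by
  have hprod : 0 ≤ ∏ i, b i := prod_nonneg fun i _ => (hb i).1
  have hsum : (2 - b i) ^ 4 + (2 - b j) ^ 4 ≤ ∑ i, (2 - b i) ^ 4 := by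
    rw [← sum_pair (f := fun i => (2 - b i) ^ 4) hij]
    exact sum_le_sum_of_subset_of_nonneg (subset_univ _) fun _ _ _ => by positivity
  have hi' : (3 / 2 : ℝ) ^ 4 ≤ (2 - b i) ^ 4 := pow_le_pow_left₀ (by norm_num) (by linarith) 4
  have hj' : (3 / 2 : ℝ) ^ 4 ≤ (2 - b j) ^ 4 := pow_le_pow_left₀ (by norm_num) (by linarith) 4
  linarith

theorem two_le_prod_add_sum_fin_four (b : Fin 4 → ℝ) (hb : ∀ i, b i ∈ Set.Icc (0 : ℝ) 2) :
    2 ≤ ∏ i, b i + (1 / (4 : ℝ)) * ∑ i, (2 - b i) ^ 4 := by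
  by_cases! hall : ∀ i, 1 / 2 < b i
  · exact two_le_prod_add_sum_of_forall_two_div_le le_rfl b
      fun i => ⟨by norm_num; exact (hall i).le, (hb i).2⟩
  obtain ⟨j, hj⟩ := hall
  by_cases! hrest : ∀ i ∈ univ.erase j, 1 / 2 < b i
  · exact two_le_prod_add_sum_fin_four_of_le_half b hb j hj hrest
  obtain ⟨i, hi, hbi⟩ := hrest
  exact two_le_prod_add_sum_fin_four_of_two_le_half b hb (ne_of_mem_erase hi) hbi hj

theorem two_le_prod_add_sum_two_sub_pow {k : ℕ} (hk : 1 ≤ k) (b : Fin k → ℝ)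
    (hb : ∀ i, b i ∈ Set.Icc (0 : ℝ) 2) :
    2 ≤ ∏ i, b i + (1 / (k : ℝ)) * ∑ i, (2 - b i) ^ k := by
  rcases lt_or_ge k 5 with hsmall | hbig
  · interval_cases k
    · simp
    · rw [Fin.prod_univ_two, Fin.sum_univ_two]
      push_cast
      nlinarith [sq_nonneg (b 0 + b 1 - 2)]
    · exact_mod_cast two_le_prod_add_sum_fin_three b hb
    · exact_mod_cast two_le_prod_add_sum_fin_four b hb
  by_cases! hlarge : ∀ i, 2 / (k : ℝ) < b i
  · exact two_le_prod_add_sum_of_forall_two_div_le (by omega) b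
      fun i => ⟨(hlarge i).le, (hb i).2⟩
  obtain ⟨j, hj⟩ := hlarge
  exact two_le_prod_add_sum_of_le_two_div hbig b hb j hj

/-- For any `x₁, …, x_k ∈ [0,1]`,
`∏ xᵢ + (1/k) ∑ (1 − xᵢ)^k ≥ 2^(1−k)`. -/
theorem xi_inequality (k : ℕ) (hk : 1 ≤ k) (x : Fin k → ℝ)
    (hx : ∀ i, x i ∈ Set.Icc (0 : ℝ) 1) :
    (2 : ℝ) ^ (1 - (k : ℤ)) ≤ ∏ i, x i + (1 / (k : ℝ)) * ∑ i, (1 - x i) ^ k := by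
  have h := two_le_prod_add_sum_two_sub_pow hk (fun i => 2 * x i)
    fun i => ⟨by linarith [(hx i).1], by linarith [(hx i).2]⟩
  simp only [prod_mul_distrib, prod_const, card_univ, Fintype.card_fin,
    show ∀ i, 2 - 2 * x i = 2 * (1 - x i) from fun i => by ring, mul_pow, ← mul_sum] at h
  rw [zpow_sub₀ two_ne_zero, zpow_one, zpow_natCast, div_le_iff₀ (by positivity)]
  linarith
end

section
/- Let k ≥ 2 be an integer. Fix 0 < β ≤ 1/2, 0 < γ < 1/5, and 0 < λ < 1/(12k), and set β' = β/(1 − 2kλ) and ρ = (γ/2)^{1 − ln(1−β')/γ}. Fix 0 < η < ρ/2^{2k²}. Suppose that, in a red/blue coloring of a complete graph, A is a vertex set that is η-regular (with itself) with internal red density at least 1/3, and B is a vertex set disjoint from A with |B| ≥ γ^{−3}. Then either there is a red copy of K_k inside A all of whose vertices have at least β|B| common red neighbors in B (i.e., a red book B^(k)_{⌈β|B|⌉} with spine in A and pages in B), or there are subsets A' ⊆ A and B' ⊆ B such that |A'| ≥ ρ|A|, |B'| ≥ (1−γ)(1−β')^{1+γ}|B|, and the pair (A', B') is lower-(λ,γ)-regular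 in the blue graph. -/
/-- Density of color-`c` edges between `X` and `Y`. -/
noncomputable def colorDens {N : ℕ} (χ : Fin N → Fin N → Bool) (c : Bool)
    (X Y : Finset (Fin N)) : ℝ :=
  (colorCount χ c X Y : ℝ) / ((X.card : ℝ) * (Y.card : ℝ))

/-- The pair `(X, Y)` (not necessarily disjoint) is `ε`-regular with respect to the red
graph of the coloring `χ` (equivalently, the blue graph). -/
def RegularPair {N : ℕ} (χ : Fin N → Fin N → Bool) (ε : ℝ) (X Y : Finset (Fin N)) : Prop :=
  ∀ X' ⊆ X, ∀ Y' ⊆ Y, ε * (X.card : ℝ) ≤ (X'.card : ℝ) → ε * (Y.card : ℝ) ≤ (Y'.card : ℝ) →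
    |colorDens χ false X Y - colorDens χ false X' Y'| ≤ ε

/-- The pair `(X, Y)` is lower-`(lam, γ)`-regular in color `c`: every pair of subsets of
proportion at least `γ` has color-`c` density at least `lam`. -/
def LowerReg {N : ℕ} (χ : Fin N → Fin N → Bool) (c : Bool) (lam γ : ℝ)
    (X Y : Finset (Fin N)) : Prop :=
  ∀ X' ⊆ X, ∀ Y' ⊆ Y, γ * (X.card : ℝ) ≤ (X'.card : ℝ) → γ * (Y.card : ℝ) ≤ (Y'.card : ℝ) →
    lam ≤ colorDens χ c X' Y'

/-!
Greedy iteration. Keep `X ⊆ A` and `Y ⊆ B` such that every vertex of `X` has at most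
`2λ|B \ Y|` blue neighbours among the pages `B \ Y` collected so far. If `(X, Y)` is not
lower-`(λ, γ)`-regular in blue, some `X' ⊆ X`, `Y' ⊆ Y` of relative sizes `γ` have blue density
below `λ`; by Markov's inequality half of `X'` has at most `2λ|Y'|` blue neighbours in `Y'`, so
moving `Y'` to the pages costs a factor `γ/2` on `X` and `1 - γ` on `Y`. Once the pages reach
`β'|B|`, the regularity of `A` yields a red `K_k` in the current `X`, and its common red
neighbourhood among the pages has size at least `(1 - 2kλ)β'|B| = β|B|`. Since `Y` never drops
below `(1 - β')|B|`, there are at most `1 - ln(1 - β')/γ` rounds, which explains `ρ`.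
-/

open Finset

def BlueSparse {N : ℕ} (χ : Fin N → Fin N → Bool) (δ : ℝ) (X P : Finset (Fin N)) : Prop :=
  ∀ v ∈ X, (#{b ∈ P | χ v b = true} : ℝ) ≤ δ * #P

def RedBookOrLowerReg {N : ℕ} (χ : Fin N → Fin N → Bool) (k : ℕ) (lam γ β θ μ : ℝ)
    (A B : Finset (Fin N)) : Prop :=
  (∃ S : Finset (Fin N), S ⊆ A ∧ S.card = k ∧ IsMonoOn χ S false ∧
      β * (B.card : ℝ) ≤ ({v : Fin N | v ∈ B ∧ ∀ u ∈ S, χ v u = false}.ncard : ℝ)) ∨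
    (∃ A' B' : Finset (Fin N), A' ⊆ A ∧ B' ⊆ B ∧
      θ * (A.card : ℝ) ≤ (A'.card : ℝ) ∧ μ * (B.card : ℝ) ≤ (B'.card : ℝ) ∧
      LowerReg χ true lam γ A' B')

/-- The state after `i` rounds of the greedy iteration: `B \ Y` are the pages collected so far. -/
structure BookRound {N : ℕ} (χ : Fin N → Fin N → Bool) (γ lam β' : ℝ) (A B : Finset (Fin N))
    (i : ℕ) (X Y : Finset (Fin N)) : Prop where
  subset_left : X ⊆ A
  subset_right : Y ⊆ B
  card_left : (γ / 2) ^ i * (#A : ℝ) ≤ #X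
  card_right_le : (#Y : ℝ) ≤ (1 - γ) ^ i * #B
  card_right_gt : (1 - β') * (#B : ℝ) < #Y
  blueSparse : BlueSparse χ (2 * lam) X (B \ Y)

lemma card_lt_two_mul_card_filter_le_of_sum_lt {ι : Type*} {s : Finset ι} {f : ι → ℝ} {a : ℝ}
    (hf : ∀ i ∈ s, 0 ≤ f i) (h : ∑ i ∈ s, f i < a * #s) :
    (#s : ℝ) < 2 * #{i ∈ s | f i ≤ 2 * a} := by
  have hsplit : (#{i ∈ s | f i ≤ 2 * a} : ℝ) + #{i ∈ s | ¬ f i ≤ 2 * a} = #s := by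
    exact_mod_cast card_filter_add_card_filter_not _
  have hbad : #{i ∈ s | ¬ f i ≤ 2 * a} * (2 * a) ≤ ∑ i ∈ s, f i :=
    calc #{i ∈ s | ¬ f i ≤ 2 * a} * (2 * a) ≤ ∑ i ∈ s with ¬ f i ≤ 2 * a, f i := by
          rw [← nsmul_eq_mul]
          exact card_nsmul_le_sum _ _ _ fun i hi => (not_le.mp (mem_filter.mp hi).2).le
      _ ≤ ∑ i ∈ s, f i := sum_le_sum_of_subset_of_nonneg (filter_subset _ _) fun i hi _ => hf i hi
  have ha : 0 < a := by
    by_contra! ha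
    nlinarith [sum_nonneg hf, (#s).cast_nonneg (α := ℝ)]
  nlinarith

section

variable {N : ℕ} {χ : Fin N → Fin N → Bool}

lemma colorCount_eq_sum (c : Bool) (X Y : Finset (Fin N)) :
    colorCount χ c X Y = ∑ x ∈ X, #{y ∈ Y | x ≠ y ∧ χ x y = c} := by
  have h : {p : Fin N × Fin N | p.1 ∈ X ∧ p.2 ∈ Y ∧ p.1 ≠ p.2 ∧ χ p.1 p.2 = c}
      = ↑{p ∈ X ×ˢ Y | p.1 ≠ p.2 ∧ χ p.1 p.2 = c} := by
    ext
    simp [and_assoc]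
  rw [colorCount, h, Set.ncard_coe_finset, card_filter, sum_product]
  simp only [card_filter]

lemma colorCount_eq_sum_of_disjoint (c : Bool) {X Y : Finset (Fin N)} (h : Disjoint X Y) :
    colorCount χ c X Y = ∑ x ∈ X, #{y ∈ Y | χ x y = c} := by
  rw [colorCount_eq_sum]
  refine sum_congr rfl fun x hx => congrArg card (filter_congr fun y hy => ?_)
  exact and_iff_right fun hxy => disjoint_left.mp h hx (hxy ▸ hy)

lemma nonempty_of_colorDens_pos {c : Bool} {X Y : Finset (Fin N)} (h : 0 < colorDens χ c X Y) :
    X.Nonempty := by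
  rcases X.eq_empty_or_nonempty with rfl | hX
  · simp [colorDens] at h
  · exact hX

lemma exists_colorDens_mul_card_le_card_filter {X : Finset (Fin N)} (hX : X.Nonempty) :
    ∃ v ∈ X, colorDens χ false X X * #X ≤ #{u ∈ X | v ≠ u ∧ χ v u = false} := by
  apply exists_le_of_sum_le hX
  have hpos : (0 : ℝ) < #X := by exact_mod_cast hX.card_pos
  rw [sum_const, nsmul_eq_mul, colorDens, ← Nat.cast_sum, ← colorCount_eq_sum]
  field_simp
  rfl

lemma IsMonoOn.insert (hsym : ∀ u v, χ u v = χ v u) {S : Finset (Fin N)} {c : Bool} {v : Fin N}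
    (hS : IsMonoOn χ S c) (hv : ∀ u ∈ S, χ v u = c) : IsMonoOn χ (insert v S) c := by
  intro u hu w hw huw
  rcases mem_insert.mp hu with rfl | huS <;> rcases mem_insert.mp hw with rfl | hwS
  · exact absurd rfl huw
  · exact hv w hwS
  · exact (hsym u w).trans (hv u huS)
  · exact hS u huS w hwS huw

/-- Every large enough subset of `A` is dense in red by regularity, so it contains a vertex whose
red neighbourhood keeps a quarter of it; iterating gives a red clique. -/
lemma exists_redClique_of_regularPair (hsym : ∀ u v, χ u v = χ v u) {A : Finset (Fin N)}
    {η : ℝ} (hreg : RegularPair χ η A A) (hdens : 1 / 3 ≤ colorDens χ false A A) (hη0 : 0 < η)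
    (hη : η ≤ 1 / 12) (j : ℕ) (X : Finset (Fin N)) (hXA : X ⊆ A) (hX : 4 ^ j * η * #A ≤ #X) :
    ∃ S ⊆ X, #S = j ∧ IsMonoOn χ S false := by
  have hA : (0 : ℝ) < #A := by
    exact_mod_cast (nonempty_of_colorDens_pos (by linarith : 0 < colorDens χ false A A)).card_pos
  induction j generalizing X with
  | zero => exact ⟨∅, empty_subset _, card_empty, fun u hu => absurd hu (notMem_empty u)⟩
  | succ j ih =>
    have h4j : (4 : ℝ) ^ j * η * #A > 0 := by positivity
    have hXη : η * #A ≤ #X := by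
      nlinarith [one_le_pow₀ (show (1 : ℝ) ≤ 4 by norm_num) (n := j), pow_succ (4 : ℝ) j]
    have hXne : X.Nonempty := card_pos.mp (by exact_mod_cast (show (0 : ℝ) < #X by nlinarith))
    have hdX : 1 / 4 ≤ colorDens χ false X X := by
      linarith [(abs_le.mp (hreg X hXA X hXA hXη hXη)).2]
    obtain ⟨v, hvX, hv⟩ := exists_colorDens_mul_card_le_card_filter hXne
    obtain ⟨S, hS, hSj, hSred⟩ := ih {u ∈ X | v ≠ u ∧ χ v u = false}
      ((filter_subset _ _).trans hXA) (by nlinarith [pow_succ (4 : ℝ) j])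
    have hvS : v ∉ S := fun h => (mem_filter.mp (hS h)).2.1 rfl
    refine ⟨insert v S, insert_subset hvX (hS.trans (filter_subset _ _)), ?_, ?_⟩
    · rw [card_insert_of_notMem hvS, hSj]
    · exact hSred.insert hsym fun u hu => (mem_filter.mp (hS hu)).2.2

lemma exists_blueSparse_of_colorDens_lt {X Y : Finset (Fin N)} {lam : ℝ} (hXY : Disjoint X Y)
    (hX : X.Nonempty) (hY : Y.Nonempty) (h : colorDens χ true X Y < lam) :
    ∃ X₁ ⊆ X, (#X : ℝ) ≤ 2 * #X₁ ∧ BlueSparse χ (2 * lam) X₁ Y := by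
  have hpos : (0 : ℝ) < #X * #Y := by
    have := hX.card_pos
    have := hY.card_pos
    positivity
  rw [colorDens, div_lt_iff₀ hpos, colorCount_eq_sum_of_disjoint _ hXY, Nat.cast_sum] at h
  have hhalf := card_lt_two_mul_card_filter_le_of_sum_lt (s := X)
    (f := fun v => (#{y ∈ Y | χ v y = true} : ℝ)) (a := lam * #Y) (fun _ _ => Nat.cast_nonneg _)
    (by linarith)
  refine ⟨_, filter_subset _ X, hhalf.le, fun v hv => ?_⟩
  rw [mul_assoc]
  exact (mem_filter.mp hv).2

variable {δ : ℝ} {X P : Finset (Fin N)}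

lemma BlueSparse.mono_left {X' : Finset (Fin N)} (h : BlueSparse χ δ X P) (hX : X' ⊆ X) :
    BlueSparse χ δ X' P :=
  fun v hv => h v (hX hv)

lemma BlueSparse.union {Q : Finset (Fin N)} (hP : BlueSparse χ δ X P) (hQ : BlueSparse χ δ X Q)
    (hPQ : Disjoint P Q) : BlueSparse χ δ X (P ∪ Q) := by
  intro v hv
  rw [filter_union, card_union_of_disjoint (disjoint_filter_filter hPQ),
    card_union_of_disjoint hPQ]
  push_cast
  linarith [hP v hv, hQ v hv]

lemma BlueSparse.card_le_ncard_commonRedNbhd (hsym : ∀ u v, χ u v = χ v u)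
    (h : BlueSparse χ δ X P) {B : Finset (Fin N)} (hPB : P ⊆ B) :
    (1 - #X * δ) * #P ≤ ({v : Fin N | v ∈ B ∧ ∀ u ∈ X, χ v u = false}.ncard : ℝ) := by
  have hblue : {b ∈ P | ¬ ∀ u ∈ X, χ b u = false} ⊆ X.biUnion fun u => {b ∈ P | χ u b = true} := by
    intro b hb
    simp only [mem_filter, not_forall, Bool.not_eq_false] at hb
    obtain ⟨hbP, u, huX, hbu⟩ := hb
    exact mem_biUnion.mpr ⟨u, huX, mem_filter.mpr ⟨hbP, (hsym u b).trans hbu⟩⟩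
  have hcard : (#{b ∈ P | ¬ ∀ u ∈ X, χ b u = false} : ℝ) ≤ #X * δ * #P :=
    calc (#{b ∈ P | ¬ ∀ u ∈ X, χ b u = false} : ℝ)
        ≤ #(X.biUnion fun u => {b ∈ P | χ u b = true}) := by exact_mod_cast card_le_card hblue
      _ ≤ ∑ u ∈ X, (#{b ∈ P | χ u b = true} : ℝ) := by exact_mod_cast card_biUnion_le
      _ ≤ ∑ u ∈ X, δ * #P := sum_le_sum h
      _ = #X * δ * #P := by rw [sum_const, nsmul_eq_mul, mul_assoc]
  have hsplit : (#{b ∈ P | ∀ u ∈ X, χ b u = false} : ℝ) + #{b ∈ P | ¬ ∀ u ∈ X, χ b u = false}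
      = #P := by
    exact_mod_cast card_filter_add_card_filter_not _
  have hncard : #{b ∈ P | ∀ u ∈ X, χ b u = false}
      ≤ {v : Fin N | v ∈ B ∧ ∀ u ∈ X, χ v u = false}.ncard := by
    rw [← Set.ncard_coe_finset]
    refine Set.ncard_le_ncard (fun b hb => ?_) (Set.toFinite _)
    rw [mem_coe, mem_filter] at hb
    exact ⟨hPB hb.1, hb.2⟩
  have := (Nat.cast_le (α := ℝ)).mpr hncard
  linarith

end

section

variable {N : ℕ} {χ : Fin N → Fin N → Bool} {k : ℕ} {lam γ β' θ : ℝ} {A B : Finset (Fin N)}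

lemma RedBookOrLowerReg.mono {β μ β₁ θ₁ μ₁ : ℝ} (h : RedBookOrLowerReg χ k lam γ β θ μ A B)
    (hβ : β₁ ≤ β) (hθ : θ₁ ≤ θ) (hμ : μ₁ ≤ μ) : RedBookOrLowerReg χ k lam γ β₁ θ₁ μ₁ A B := by
  rcases h with ⟨S, hSA, hSk, hSred, hbook⟩ | ⟨A', B', hA', hB', hθA, hμB, hreg⟩
  · exact Or.inl ⟨S, hSA, hSk, hSred, le_trans (by gcongr) hbook⟩
  · exact Or.inr ⟨A', B', hA', hB', le_trans (by gcongr) hθA, le_trans (by gcongr) hμB, hreg⟩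

lemma BookRound.exists_of_not_lowerReg {i : ℕ} {X Y : Finset (Fin N)} (hAB : Disjoint A B)
    (hγ0 : 0 < γ) (hβ' : β' ≤ 1) (hA : 0 < (#A : ℝ)) (hr : BookRound χ γ lam β' A B i X Y)
    (hlr : ¬ LowerReg χ true lam γ X Y) :
    ∃ X₁ ⊆ X, ∃ Y' ⊆ Y, (γ / 2) ^ (i + 1) * #A ≤ #X₁ ∧ γ * #Y ≤ #Y' ∧
      BlueSparse χ (2 * lam) X₁ (B \ (Y \ Y')) := by
  simp only [LowerReg, not_forall, not_le, exists_prop] at hlr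
  obtain ⟨X', hX', Y', hY', hX'card, hY'card, hdens⟩ := hlr
  have hYB := hY'.trans hr.subset_right
  have hX : 0 < (#X : ℝ) := lt_of_lt_of_le (by positivity) hr.card_left
  have hY : 0 < (#Y : ℝ) := lt_of_le_of_lt (by nlinarith) hr.card_right_gt
  have hX'ne : X'.Nonempty := card_pos.mp (by exact_mod_cast (show (0 : ℝ) < #X' by nlinarith))
  have hY'ne : Y'.Nonempty := card_pos.mp (by exact_mod_cast (show (0 : ℝ) < #Y' by nlinarith))
  obtain ⟨X₁, hX₁, hX₁card, hX₁sparse⟩ := exists_blueSparse_of_colorDens_lt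
    (hAB.mono (hX'.trans hr.subset_left) hYB) hX'ne hY'ne hdens
  refine ⟨X₁, hX₁.trans hX', Y', hY', ?_, hY'card, ?_⟩
  · rw [pow_succ']
    nlinarith [hr.card_left]
  · rw [sdiff_sdiff_eq_sdiff_union hYB]
    exact (hr.blueSparse.mono_left (hX₁.trans hX')).union hX₁sparse
      (disjoint_sdiff_self_left.mono_right hY')

lemma BookRound.step {i : ℕ} {X Y : Finset (Fin N)} (hsym : ∀ u v, χ u v = χ v u)
    (hAB : Disjoint A B) (hγ0 : 0 < γ) (hγ1 : γ ≤ 1) (hkl : 2 * k * lam ≤ 1) (hβ' : β' ≤ 1)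
    (hA : 0 < (#A : ℝ)) (hθ : θ ≤ (γ / 2) ^ (i + 1))
    (hclique : ∀ X ⊆ A, θ * #A ≤ #X → ∃ S ⊆ X, #S = k ∧ IsMonoOn χ S false)
    (hr : BookRound χ γ lam β' A B i X Y) :
    RedBookOrLowerReg χ k lam γ ((1 - 2 * k * lam) * β') θ (1 - β') A B ∨
      ∃ X₁ Y₁, BookRound χ γ lam β' A B (i + 1) X₁ Y₁ := by
  by_cases hlr : LowerReg χ true lam γ X Y
  · refine Or.inl (Or.inr ⟨X, Y, hr.subset_left, hr.subset_right, ?_, hr.card_right_gt.le, hlr⟩)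
    have : θ ≤ (γ / 2) ^ i :=
      hθ.trans (pow_le_pow_of_le_one (by positivity) (by linarith) i.le_succ)
    nlinarith [hr.card_left]
  obtain ⟨X₁, hX₁, Y', hY', hX₁card, hY'card, hsparse⟩ :=
    hr.exists_of_not_lowerReg hAB hγ0 hβ' hA hlr
  have hX₁A : X₁ ⊆ A := hX₁.trans hr.subset_left
  by_cases hY₁ : (1 - β') * #B < #(Y \ Y')
  · refine Or.inr ⟨X₁, Y \ Y', ⟨hX₁A, sdiff_subset.trans hr.subset_right, hX₁card, ?_, hY₁, hsparse⟩⟩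
    have : (#(Y \ Y') : ℝ) + #Y' = #Y := by exact_mod_cast card_sdiff_add_card_eq_card hY'
    rw [pow_succ']
    nlinarith [hr.card_right_le]
  · have hsplit : (#(B \ (Y \ Y')) : ℝ) + #(Y \ Y') = #B := by
      exact_mod_cast card_sdiff_add_card_eq_card (sdiff_subset.trans hr.subset_right)
    obtain ⟨S, hSX₁, hSk, hSred⟩ := hclique X₁ hX₁A (by nlinarith)
    refine Or.inl (Or.inl ⟨S, hSX₁.trans hX₁A, hSk, hSred, ?_⟩)
    have hbook := (hsparse.mono_left hSX₁).card_le_ncard_commonRedNbhd hsym sdiff_subset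
    rw [hSk] at hbook
    nlinarith

theorem redBookOrLowerReg_of_forall_clique {m : ℕ} (hsym : ∀ u v, χ u v = χ v u)
    (hAB : Disjoint A B) (hγ0 : 0 < γ) (hγ1 : γ ≤ 1) (hkl : 2 * k * lam ≤ 1) (hβ' : 0 < β')
    (hA : 0 < (#A : ℝ)) (hB : 0 < (#B : ℝ)) (hm : (1 - γ) ^ m ≤ 1 - β') (hθ : θ ≤ (γ / 2) ^ m)
    (hclique : ∀ X ⊆ A, θ * #A ≤ #X → ∃ S ⊆ X, #S = k ∧ IsMonoOn χ S false) :
    RedBookOrLowerReg χ k lam γ ((1 - 2 * k * lam) * β') θ (1 - β') A B := by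
  have hβ'1 : β' ≤ 1 := by linarith [pow_nonneg (sub_nonneg.mpr hγ1) m]
  have hround : ∀ i ≤ m, RedBookOrLowerReg χ k lam γ ((1 - 2 * k * lam) * β') θ (1 - β') A B ∨
      ∃ X Y, BookRound χ γ lam β' A B i X Y := by
    intro i hi
    induction i with
    | zero => exact Or.inr ⟨A, B, subset_rfl, subset_rfl, by simp, by simp, by nlinarith,
        fun v _ => by simp⟩
    | succ i ih =>
      rcases ih (by omega) with h | ⟨X, Y, hr⟩
      · exact Or.inl h
      · exact hr.step hsym hAB hγ0 hγ1 hkl hβ'1 hA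
          (hθ.trans (pow_le_pow_of_le_one (by positivity) (by linarith) hi)) hclique
  rcases hround m le_rfl with h | ⟨X, Y, hr⟩
  · exact h
  · nlinarith [hr.card_right_le, hr.card_right_gt]

end

lemma exists_rpow_le_pow_and_one_sub_pow_le {γ x : ℝ} (hγ0 : 0 < γ) (hγ1 : γ ≤ 1) (hx0 : 0 < x)
    (hx1 : x ≤ 1) : ∃ m : ℕ, (γ / 2) ^ (1 - Real.log x / γ) ≤ (γ / 2) ^ m ∧ (1 - γ) ^ m ≤ x := by
  have hL : 0 ≤ -Real.log x / γ := div_nonneg (neg_nonneg.mpr (Real.log_nonpos hx0.le hx1)) hγ0.le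
  refine ⟨⌊-Real.log x / γ⌋₊ + 1, ?_, ?_⟩
  · rw [← Real.rpow_natCast]
    refine Real.rpow_le_rpow_of_exponent_ge (by positivity) (by linarith) ?_
    push_cast
    linarith [Nat.floor_le hL, neg_div γ (Real.log x)]
  · have hm : -Real.log x < γ * (⌊-Real.log x / γ⌋₊ + 1 : ℕ) := by
      rw [← div_lt_iff₀' hγ0]
      exact_mod_cast Nat.lt_floor_add_one _
    calc (1 - γ) ^ (⌊-Real.log x / γ⌋₊ + 1) ≤ Real.exp (-γ) ^ (⌊-Real.log x / γ⌋₊ + 1) :=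
          pow_le_pow_left₀ (by linarith) (by linarith [Real.add_one_le_exp (-γ)]) _
      _ = Real.exp (-(γ * (⌊-Real.log x / γ⌋₊ + 1 : ℕ))) := by rw [← Real.exp_nat_mul]; ring_nf
      _ ≤ Real.exp (Real.log x) := Real.exp_le_exp.mpr (by linarith)
      _ = x := Real.exp_log hx0

lemma four_pow_le_two_pow_two_mul_sq (k : ℕ) : (4 : ℝ) ^ k ≤ 2 ^ (2 * k ^ 2) := by
  rw [show (4 : ℝ) = 2 ^ 2 by norm_num, ← pow_mul]
  exact pow_le_pow_right₀ (by norm_num) (by nlinarith)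

lemma one_sub_mul_rpow_one_add_le {γ x : ℝ} (hγ : 0 ≤ γ) (hx0 : 0 < x) (hx1 : x ≤ 1) : (1 - γ) * x ^ (1 + γ) ≤ x := by
  have hpow : x ^ (1 + γ) ≤ x := by
    simpa using Real.rpow_le_rpow_of_exponent_ge hx0 hx1 (by linarith : (1 : ℝ) ≤ 1 + γ)
  nlinarith [Real.rpow_nonneg hx0.le (1 + γ)]

theorem lower_regular_or_red_book_general (N k : ℕ) (hk : 2 ≤ k)
    (χ : Fin N → Fin N → Bool) (hsym : ∀ u v, χ u v = χ v u)
    (β γ lam β' ρ η : ℝ)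
    (hβ0 : 0 < β) (hβ1 : β ≤ 1 / 2)
    (hγ0 : 0 < γ) (hγ1 : γ < 1 / 5)
    (hlam1 : lam < 1 / (12 * (k : ℝ)))
    (hβ' : β' = β / (1 - 2 * (k : ℝ) * lam))
    (hρ : ρ = (γ / 2) ^ ((1 : ℝ) - Real.log (1 - β') / γ))
    (hη0 : 0 < η) (hη1 : η < ρ / 2 ^ (2 * k ^ 2))
    (A B : Finset (Fin N)) (hAB : Disjoint A B)
    (hAreg : RegularPair χ η A A)
    (hAdens : 1 / 3 ≤ colorDens χ false A A)
    (hB : (γ⁻¹) ^ (3 : ℕ) ≤ (B.card : ℝ)) :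
    (∃ S : Finset (Fin N), S ⊆ A ∧ S.card = k ∧ IsMonoOn χ S false ∧
        β * (B.card : ℝ) ≤ ({v : Fin N | v ∈ B ∧ ∀ u ∈ S, χ v u = false}.ncard : ℝ)) ∨
    (∃ A' B' : Finset (Fin N), A' ⊆ A ∧ B' ⊆ B ∧
        ρ * (A.card : ℝ) ≤ (A'.card : ℝ) ∧
        (1 - γ) * (1 - β') ^ ((1 : ℝ) + γ) * (B.card : ℝ) ≤ (B'.card : ℝ) ∧
        LowerReg χ true lam γ A' B') := by
  have hkl : 2 * k * lam < 1 / 6 := by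
    rw [lt_div_iff₀ (by positivity)] at hlam1
    nlinarith
  have hβ'0 : 0 < β' := hβ' ▸ div_pos hβ0 (by linarith)
  have hβ'1 : β' ≤ 3 / 5 := by
    rw [hβ', div_le_iff₀ (by linarith)]
    nlinarith
  obtain ⟨m, hρm, hm⟩ := exists_rpow_le_pow_and_one_sub_pow_le hγ0 (by linarith)
    (by linarith : 0 < 1 - β') (by linarith)
  rw [← hρ] at hρm
  have hρ1 : ρ ≤ 1 := hρm.trans (pow_le_one₀ (by positivity) (by linarith))
  have h4k : (4 : ℝ) ^ k * η ≤ ρ := by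
    rw [lt_div_iff₀ (by positivity)] at hη1
    nlinarith [four_pow_le_two_pow_two_mul_sq k]
  have h16 : (4 : ℝ) ^ 2 ≤ 4 ^ k := pow_le_pow_right₀ (by norm_num) hk
  have hA : (0 : ℝ) < #A := by
    exact_mod_cast (nonempty_of_colorDens_pos (by linarith : 0 < colorDens χ false A A)).card_pos
  refine (redBookOrLowerReg_of_forall_clique hsym hAB hγ0 (by linarith) (by linarith) hβ'0 hA
    (lt_of_lt_of_le (by positivity) hB) hm hρm fun X hXA hX =>
      exists_redClique_of_regularPair hsym hAreg hAdens hη0 (by nlinarith) k X hXA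
        (by nlinarith)).mono ?_ le_rfl
    (one_sub_mul_rpow_one_add_le hγ0.le (by linarith) (by linarith))
  rw [hβ', mul_div_cancel₀ _ (by linarith)]

/-- Given an `η`-regular set `A` of red density at least `1/3` and a disjoint set `B`
with `|B| ≥ γ⁻³`, either there is a red `K_k` in `A` with at least `β|B|` common red
neighbors in `B`, or there are large subsets `A' ⊆ A`, `B' ⊆ B` with `(A', B')`
lower-`(λ, γ)`-regular in blue. -/
theorem lower_regular_or_red_book (N k : ℕ) (hk : 2 ≤ k)
    (χ : Fin N → Fin N → Bool) (hsym : ∀ u v, χ u v = χ v u)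
    (β γ lam β' ρ η : ℝ)
    (hβ0 : 0 < β) (hβ1 : β ≤ 1 / 2)
    (hγ0 : 0 < γ) (hγ1 : γ < 1 / 5)
    (hlam0 : 0 < lam) (hlam1 : lam < 1 / (12 * (k : ℝ)))
    (hβ' : β' = β / (1 - 2 * (k : ℝ) * lam))
    (hρ : ρ = (γ / 2) ^ ((1 : ℝ) - Real.log (1 - β') / γ))
    (hη0 : 0 < η) (hη1 : η < ρ / 2 ^ (2 * k ^ 2))
    (A B : Finset (Fin N)) (hAB : Disjoint A B)
    (hAreg : RegularPair χ η A A)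
    (hAdens : 1 / 3 ≤ colorDens χ false A A)
    (hB : (γ⁻¹) ^ (3 : ℕ) ≤ (B.card : ℝ)) :
    (∃ S : Finset (Fin N), S ⊆ A ∧ S.card = k ∧ IsMonoOn χ S false ∧
        β * (B.card : ℝ) ≤ ({v : Fin N | v ∈ B ∧ ∀ u ∈ S, χ v u = false}.ncard : ℝ)) ∨
    (∃ A' B' : Finset (Fin N), A' ⊆ A ∧ B' ⊆ B ∧
        ρ * (A.card : ℝ) ≤ (A'.card : ℝ) ∧
        (1 - γ) * (1 - β') ^ ((1 : ℝ) + γ) * (B.card : ℝ) ≤ (B'.card : ℝ) ∧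
        LowerReg χ true lam γ A' B') :=
  lower_regular_or_red_book_general N k hk χ hsym β γ lam β' ρ η hβ0 hβ1 hγ0 hγ1 hlam1 hβ' hρ hη0
    hη1 A B hAB hAreg hAdens hB
end

section
/- Fix 0 < λ < 1, an integer r ≥ 1, and 0 < γ < λ^r. Suppose G is a bipartite graph with parts A and B such that the pair (A,B) is lower-(λ,γ)-regular. Suppose H = (B, F) is an r-uniform hypergraph with vertex set B and edge set F. Define an extension to be a pair (a, f) ∈ A × F such that a is adjacent in G to every vertex of f. Then the number of extensions is at least λ^r·|A|·(|F| − (rγ/λ^{r−1})·|B|^r). -/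
/-!
Call an `i`-subset `S ⊆ B` small if its common neighbourhood `N(S)` in `A` has fewer than
`λ^i |A|` vertices. If `S` is not small then `|N(S)| ≥ λ^i |A| ≥ γ |A|`, so lower regularity
applied to `N(S)` leaves at most `γ |B|` vertices `v ∈ B` with `|N(S ∪ {v})| < λ |N(S)|`.
Every small `(i+1)`-set is `S ∪ {v}` with either `S` small or `S` not small and `v` one of
these exceptional vertices, so by induction there are at most `i γ |B|^i` small `i`-sets.
Every edge of `F` that is not small has at least `λ^r |A|` extensions; since `λ^(r-1) ≤ 1`,
the resulting bound `λ^r |A| (|F| - r γ |B|^r)` is at least the claimed one.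
-/

/-- Number of pairs in `X × Y` that are edges of `G`. -/
noncomputable def edgeCnt {V : Type*} (G : SimpleGraph V) (X Y : Finset V) : ℕ :=
  {p : V × V | p.1 ∈ X ∧ p.2 ∈ Y ∧ G.Adj p.1 p.2}.ncard

/-- Edge density between the vertex sets `X` and `Y`. -/
noncomputable def gDens {V : Type*} (G : SimpleGraph V) (X Y : Finset V) : ℝ :=
  (edgeCnt G X Y : ℝ) / ((X.card : ℝ) * (Y.card : ℝ))

/-- The pair `(X, Y)` is lower-`(lam, γ)`-regular in `G`. -/
def GLowerReg {V : Type*} (G : SimpleGraph V) (lam γ : ℝ) (X Y : Finset V) : Prop :=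
  ∀ X' ⊆ X, ∀ Y' ⊆ Y, γ * (X.card : ℝ) ≤ (X'.card : ℝ) → γ * (Y.card : ℝ) ≤ (Y'.card : ℝ) →
    lam ≤ gDens G X' Y'

open Finset
open scoped Classical

theorem ncard_prod_filter_eq_sum {α β : Type*} (X : Finset α) (Y : Finset β)
    (P : α → β → Prop) [∀ x y, Decidable (P x y)] :
    {p : α × β | p.1 ∈ X ∧ p.2 ∈ Y ∧ P p.1 p.2}.ncard = ∑ y ∈ Y, #{x ∈ X | P x y} := by
  have hset : {p : α × β | p.1 ∈ X ∧ p.2 ∈ Y ∧ P p.1 p.2} = ↑{p ∈ X ×ˢ Y | P p.1 p.2} := by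
    ext
    simp [and_assoc]
  rw [hset, Set.ncard_coe_finset, card_filter, sum_product_right]
  simp only [card_filter]

section Graph

variable {V : Type*} (G : SimpleGraph V)

theorem edgeCnt_eq_sum (X Y : Finset V) : edgeCnt G X Y = ∑ y ∈ Y, #{x ∈ X | G.Adj x y} :=
  ncard_prod_filter_eq_sum X Y G.Adj

variable {G}

theorem card_mul_card_pos_and_le_edgeCnt {lam : ℝ} {X Y : Finset V} (hlam : 0 < lam)
    (h : lam ≤ gDens G X Y) :
    0 < (#X : ℝ) * #Y ∧ lam * #X * #Y ≤ edgeCnt G X Y := by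
  have hpos : 0 < (#X : ℝ) * #Y := by
    by_contra! h0
    have hzero : (#X : ℝ) * #Y = 0 := le_antisymm h0 (by positivity)
    rw [gDens, hzero, div_zero] at h
    linarith
  rw [gDens, le_div_iff₀ hpos] at h
  exact ⟨hpos, by linarith⟩

variable (G) in
noncomputable def lowDegreeVerts (X B : Finset V) (lam : ℝ) : Finset V :=
  {v ∈ B | (#{a ∈ X | G.Adj a v} : ℝ) < lam * #X}

theorem GLowerReg.card_lowDegreeVerts_le {lam γ : ℝ} {A B X : Finset V}
    (hreg : GLowerReg G lam γ A B) (hlam : 0 < lam) (hXA : X ⊆ A) (hX : γ * #A ≤ #X) :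
    (#(lowDegreeVerts G X B lam) : ℝ) ≤ γ * #B := by
  by_contra! hY
  set Y := lowDegreeVerts G X B lam
  obtain ⟨hpos, hle⟩ :=
    card_mul_card_pos_and_le_edgeCnt hlam (hreg X hXA Y (filter_subset _ _) hX hY.le)
  have hYne : Y.Nonempty := card_pos.1 (by exact_mod_cast pos_of_mul_pos_right hpos (by positivity))
  have hlt : (edgeCnt G X Y : ℝ) < lam * #X * #Y := by
    rw [edgeCnt_eq_sum]
    push_cast
    calc ∑ y ∈ Y, (#{x ∈ X | G.Adj x y} : ℝ) < ∑ _y ∈ Y, lam * #X :=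
          sum_lt_sum_of_nonempty hYne fun y hy => (mem_filter.1 hy).2
      _ = lam * #X * #Y := by rw [sum_const, nsmul_eq_mul]; ring
  linarith

variable (G) in
noncomputable def commonNbrsIn (A S : Finset V) : Finset V :=
  {a ∈ A | ∀ v ∈ S, G.Adj a v}

theorem commonNbrsIn_insert [DecidableEq V] (A S : Finset V) (v : V) :
    commonNbrsIn G A (insert v S) = {a ∈ commonNbrsIn G A S | G.Adj a v} := by
  ext a
  simp only [commonNbrsIn, mem_filter, forall_mem_insert]
  tauto

variable (G) in
noncomputable def smallNbhdSets (A B : Finset V) (lam : ℝ) (i : ℕ) : Finset (Finset V) :=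
  {S ∈ B.powersetCard i | (#(commonNbrsIn G A S) : ℝ) < lam ^ i * #A}

theorem smallNbhdSets_succ_subset [DecidableEq V] {lam : ℝ} (hlam : 0 ≤ lam)
    (A B : Finset V) (i : ℕ) :
    smallNbhdSets G A B lam (i + 1) ⊆
      (smallNbhdSets G A B lam i ×ˢ B).image (fun p => insert p.2 p.1) ∪
      ((B.powersetCard i \ smallNbhdSets G A B lam i).sigma
          fun S => lowDegreeVerts G (commonNbrsIn G A S) B lam).image
        (fun p => insert p.2 p.1) := by
  intro S hS
  obtain ⟨hS, hsmall⟩ := mem_filter.1 hS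
  obtain ⟨hSB, hScard⟩ := mem_powersetCard.1 hS
  obtain ⟨v, hv⟩ : S.Nonempty := card_pos.1 (by omega)
  have hS' : S.erase v ∈ B.powersetCard i :=
    mem_powersetCard.2 ⟨(erase_subset _ _).trans hSB, by rw [card_erase_of_mem hv]; omega⟩
  have hins : insert v (S.erase v) = S := insert_erase hv
  by_cases h : S.erase v ∈ smallNbhdSets G A B lam i
  · exact mem_union_left _ (mem_image.2 ⟨(S.erase v, v), mem_product.2 ⟨h, hSB hv⟩, hins⟩)
  · refine mem_union_right _
      (mem_image.2 ⟨⟨S.erase v, v⟩, mem_sigma.2 ⟨mem_sdiff.2 ⟨hS', h⟩, ?_⟩, hins⟩)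
    have hlarge : lam ^ i * #A ≤ #(commonNbrsIn G A (S.erase v)) := by
      simpa [smallNbhdSets, hS'] using h
    refine mem_filter.2 ⟨hSB hv, ?_⟩
    rw [← commonNbrsIn_insert, hins]
    calc (#(commonNbrsIn G A S) : ℝ) < lam ^ (i + 1) * #A := hsmall
      _ = lam * (lam ^ i * #A) := by ring
      _ ≤ lam * #(commonNbrsIn G A (S.erase v)) := by gcongr

theorem card_smallNbhdSets_le [DecidableEq V] {lam γ : ℝ} {A B : Finset V}
    (hreg : GLowerReg G lam γ A B) (hlam0 : 0 < lam) (hlam1 : lam ≤ 1) (hγ : 0 ≤ γ) :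
    ∀ i, γ ≤ lam ^ i → (#(smallNbhdSets G A B lam i) : ℝ) ≤ i * γ * #B ^ i
  | 0, _ => by simp [smallNbhdSets, commonNbrsIn]
  | i + 1, hγsucc => by
    set good := B.powersetCard i \ smallNbhdSets G A B lam i
    have hγi : γ ≤ lam ^ i := hγsucc.trans (pow_le_pow_of_le_one hlam0.le hlam1 (Nat.le_succ i))
    have ih := card_smallNbhdSets_le hreg hlam0 hlam1 hγ i hγi
    have hlow : ∀ S ∈ good, (#(lowDegreeVerts G (commonNbrsIn G A S) B lam) : ℝ) ≤ γ * #B := by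
      intro S hS
      obtain ⟨hSB, hlarge⟩ := mem_sdiff.1 hS
      refine hreg.card_lowDegreeVerts_le hlam0 (filter_subset _ _) ?_
      calc γ * #A ≤ lam ^ i * #A := by gcongr
        _ ≤ #(commonNbrsIn G A S) := by simpa [smallNbhdSets, hSB] using hlarge
    have hgood : (#good : ℝ) ≤ #B ^ i := by
      calc (#good : ℝ) ≤ #(B.powersetCard i) := by exact_mod_cast card_le_card sdiff_subset
        _ = (#B).choose i := by rw [card_powersetCard]
        _ ≤ #B ^ i := by exact_mod_cast Nat.choose_le_pow _ _
    calc (#(smallNbhdSets G A B lam (i + 1)) : ℝ)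
        ≤ #(smallNbhdSets G A B lam i) * #B
          + ∑ S ∈ good, (#(lowDegreeVerts G (commonNbrsIn G A S) B lam) : ℝ) := by
          have := (card_le_card (smallNbhdSets_succ_subset (G := G) hlam0.le A B i)).trans
            ((card_union_le _ _).trans (add_le_add (card_image_le.trans_eq (card_product _ _))
              (card_image_le.trans_eq (card_sigma _ _))))
          exact_mod_cast this
      _ ≤ i * γ * #B ^ i * #B + #B ^ i * (γ * #B) := by
          gcongr
          calc ∑ S ∈ good, (#(lowDegreeVerts G (commonNbrsIn G A S) B lam) : ℝ)
              ≤ #good * (γ * #B) := by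
                simpa only [nsmul_eq_mul] using sum_le_card_nsmul _ _ _ hlow
            _ ≤ #B ^ i * (γ * #B) := by gcongr
      _ = ↑(i + 1) * γ * #B ^ (i + 1) := by push_cast; ring

theorem le_sum_card_commonNbrsIn {lam : ℝ} {A B : Finset V} {F : Finset (Finset V)} {r : ℕ}
    (hlam : 0 ≤ lam) (hF : F ⊆ B.powersetCard r) :
    lam ^ r * #A * (#F - #(smallNbhdSets G A B lam r)) ≤
      ∑ f ∈ F, (#(commonNbrsIn G A f) : ℝ) := by
  set good := F \ smallNbhdSets G A B lam r
  have hcard : (#F : ℝ) - #(smallNbhdSets G A B lam r) ≤ #good := by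
    have := card_le_card_sdiff_add_card (s := F) (t := smallNbhdSets G A B lam r)
    rw [sub_le_iff_le_add]
    exact_mod_cast this
  calc lam ^ r * #A * (#F - #(smallNbhdSets G A B lam r)) ≤ #good * (lam ^ r * #A) := by
        rw [mul_comm]
        gcongr
    _ ≤ ∑ f ∈ good, (#(commonNbrsIn G A f) : ℝ) := by
        rw [← nsmul_eq_mul]
        refine card_nsmul_le_sum _ _ _ fun f hf => ?_
        obtain ⟨hfF, hf⟩ := mem_sdiff.1 hf
        simpa [smallNbhdSets, hF hfF] using hf
    _ ≤ ∑ f ∈ F, (#(commonNbrsIn G A f) : ℝ) :=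
        sum_le_sum_of_subset_of_nonneg sdiff_subset fun _ _ _ => by positivity

end Graph

theorem lower_regular_extension_count_general {V : Type} [DecidableEq V]
    (G : SimpleGraph V) (lam γ : ℝ) (r : ℕ)
    (hlam0 : 0 < lam) (hlam1 : lam < 1)
    (hγ0 : 0 < γ) (hγ1 : γ < lam ^ r)
    (A B : Finset V)
    (hreg : GLowerReg G lam γ A B)
    (F : Finset (Finset V)) (hF : ∀ f ∈ F, f ⊆ B ∧ f.card = r) :
    lam ^ r * (A.card : ℝ) * ((F.card : ℝ) - r * γ / lam ^ (r - 1) * (B.card : ℝ) ^ r) ≤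
      ({p : V × Finset V | p.1 ∈ A ∧ p.2 ∈ F ∧ ∀ v ∈ p.2, G.Adj p.1 v}.ncard : ℝ) := by
  have hsmall := card_smallNbhdSets_le hreg hlam0 hlam1.le hγ0.le r hγ1.le
  have hweaker : r * γ * (#B : ℝ) ^ r ≤ r * γ / lam ^ (r - 1) * #B ^ r := by
    gcongr
    exact le_div_self (by positivity) (pow_pos hlam0 _) (pow_le_one₀ hlam0.le hlam1.le)
  rw [ncard_prod_filter_eq_sum A F fun a f => ∀ v ∈ f, G.Adj a v, Nat.cast_sum]
  calc lam ^ r * #A * (#F - r * γ / lam ^ (r - 1) * #B ^ r)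
      ≤ lam ^ r * #A * (#F - #(smallNbhdSets G A B lam r)) := by gcongr; linarith
    _ ≤ ∑ f ∈ F, (#(commonNbrsIn G A f) : ℝ) :=
        le_sum_card_commonNbrsIn hlam0.le fun f hf => mem_powersetCard.2 (hF f hf)

/-- If the pair `(A, B)` of parts of a bipartite graph is lower-`(λ, γ)`-regular and `F`
is an `r`-uniform hypergraph on `B`, then the number of pairs `(a, f) ∈ A × F` with `a`
adjacent to every vertex of `f` is at least `λ^r |A| (|F| − (rγ/λ^(r−1)) |B|^r)`. -/
theorem lower_regular_extension_count {V : Type} [Fintype V] [DecidableEq V]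
    (G : SimpleGraph V) (lam γ : ℝ) (r : ℕ) (hr : 1 ≤ r)
    (hlam0 : 0 < lam) (hlam1 : lam < 1)
    (hγ0 : 0 < γ) (hγ1 : γ < lam ^ r)
    (A B : Finset V) (hAB : Disjoint A B)
    (hreg : GLowerReg G lam γ A B)
    (F : Finset (Finset V)) (hF : ∀ f ∈ F, f ⊆ B ∧ f.card = r) :
    lam ^ r * (A.card : ℝ) * ((F.card : ℝ) - r * γ / lam ^ (r - 1) * (B.card : ℝ) ^ r) ≤
      ({p : V × Finset V | p.1 ∈ A ∧ p.2 ∈ F ∧ ∀ v ∈ p.2, G.Adj p.1 v}.ncard : ℝ) :=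
  lower_regular_extension_count_general G lam γ r hlam0 hlam1 hγ0 hγ1 A B hreg F hF
end

section
/- Let k ≥ 3 be an integer. Then for every ε₀ > 0 there exists δ₀ > 0 such that for any x₁, ..., x_k ∈ [0,1] with |x_j − 1/2| ≥ ε₀ for some index j, one has ∏_{i=1}^k x_i + (1/k)·∑_{i=1}^k (1 − x_i)^k ≥ 2^{1−k} + δ₀. -/
/-!
Substitute `x i = (1 + u i) / 2`, so that `u ∈ [-1, 1]ᵏ` and, after multiplying by `2 ^ k`, the
claim becomes `∏ (1 + u i) + (1/k) ∑ (1 - u i) ^ k ≥ 2 + |u j| ^ 3 / 20`.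

If every `u i ≥ -7/10`, bound the product below by `exp (∑ log (1 + u i)) ≥ 1 + ∑ log (1 + u i)`.
The inequality then splits into the one-variable estimates
`log (1 + u) + (1 - u) ^ k / k ≥ 1 / k + |u| ^ 3 / 6`, which come from truncated binomial
expansions of `(1 - u) ^ k` and Taylor bounds for the logarithm.
If some `u i < -7/10`, the single term `(1 - u i) ^ k / k ≥ 1.7 ^ k / k` already exceeds `2.05`
when `k ≥ 4`, and for `k = 3` a direct polynomial estimate gives the same bound.
-/

open Real Finset

theorem one_sub_mul_add_sq_le_one_sub_pow {u : ℝ} (hu : u ≤ 1) (k : ℕ) :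
    1 - k * u + (k - 1) * u ^ 2 ≤ (1 - u) ^ k := by
  induction k with
  | zero => norm_num; positivity
  | succ k ih =>
    rcases k with _ | k
    · simp
    · have step := mul_le_mul_of_nonneg_left ih (sub_nonneg.2 hu)
      rw [← pow_succ'] at step
      push_cast at step ⊢
      nlinarith [mul_nonneg (mul_nonneg k.cast_nonneg (sq_nonneg u)) (sub_nonneg.2 hu)]

theorem one_add_mul_add_choose_le_one_add_pow {v : ℝ} (hv : 0 ≤ v) (k : ℕ) :
    1 + k * v + k.choose 2 * v ^ 2 + k.choose 3 * v ^ 3 ≤ (1 + v) ^ k := by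
  induction k with
  | zero => simp
  | succ k ih =>
    have step := mul_le_mul_of_nonneg_left ih (by linarith : 0 ≤ 1 + v)
    rw [← pow_succ'] at step
    simp only [Nat.choose_succ_succ, Nat.choose_one_right, Nat.cast_add, Nat.cast_succ] at step ⊢
    nlinarith [mul_nonneg (Nat.cast_nonneg (k.choose 3) : (0:ℝ) ≤ _) (pow_nonneg hv 4)]

theorem one_add_mul_add_sq_add_cube_le_one_add_pow {v : ℝ} (hv : 0 ≤ v) {k : ℕ}
    (hk : 3 ≤ k) : 1 + k * (v + v ^ 2 + v ^ 3 / 3) ≤ (1 + v) ^ k := by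
  have h2 := Nat.choose_succ_right_eq k 1
  have h3 := Nat.choose_succ_right_eq k 2
  obtain ⟨m, rfl⟩ := Nat.exists_eq_add_of_le' hk
  simp only [Nat.choose_one_right, show m + 3 - 1 = m + 2 by omega,
    show m + 3 - 2 = m + 1 by omega] at h2 h3
  have hc2 : ((m + 3 : ℕ) : ℝ) ≤ (m + 3).choose 2 := by exact_mod_cast (by nlinarith)
  have hc3 : ((m + 3 : ℕ) : ℝ) ≤ 3 * (m + 3).choose 3 := by exact_mod_cast (by nlinarith)
  nlinarith [one_add_mul_add_choose_le_one_add_pow hv (m + 3),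
    mul_le_mul_of_nonneg_right hc2 (sq_nonneg v), mul_le_mul_of_nonneg_right hc3 (pow_nonneg hv 3)]

theorem sub_sq_div_two_le_log_one_add {u : ℝ} (hu : 0 ≤ u) : u - u ^ 2 / 2 ≤ log (1 + u) := by
  refine le_trans ?_ (le_log_one_add_of_nonneg hu)
  rw [le_div_iff₀ (by linarith)]
  nlinarith [pow_nonneg hu 3]

theorem neg_add_sq_add_cube_le_log_one_sub {v : ℝ} (h0 : 0 ≤ v) (h1 : v ≤ 7 / 10) :
    -(v + v ^ 2 + v ^ 3 / 6) ≤ log (1 - v) := by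
  set x := v + v ^ 2 + v ^ 3 / 6 with hx
  have hexp : 1 + x + x ^ 2 / 2 + x ^ 3 / 6 + x ^ 4 / 24 ≤ exp x := by
    simpa [sum_range_succ, Nat.factorial] using sum_le_exp_of_nonneg (by positivity : 0 ≤ x) 5
  have hpow (n : ℕ) : v ^ (n + 2) ≤ (7 / 10) ^ n * v ^ 2 := by
    rw [pow_add]; exact mul_le_mul_of_nonneg_right (pow_le_pow_left₀ h0 h1 n) (sq_nonneg v)
  -- Expanded, the right side minus `1` is `v ^ 2 (1/2 - v/6 - v^2/8 - ⋯)` with all further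
  -- coefficients negative, so bounding each `v ^ (n + 2)` by `(7/10) ^ n v ^ 2` suffices.
  have key : 1 ≤ (1 - v) * (1 + x + x ^ 2 / 2 + x ^ 3 / 6 + x ^ 4 / 24) := by
    rw [hx]
    linarith [hpow 1, hpow 2, hpow 3, hpow 4, hpow 5, hpow 6, hpow 7, hpow 8, hpow 9, hpow 10,
      hpow 11, sq_nonneg v]
  rw [le_log_iff_exp_le (by linarith), exp_neg, inv_le_iff_one_le_mul₀ (exp_pos _)]
  nlinarith [mul_le_mul_of_nonneg_left hexp (by linarith : (0:ℝ) ≤ 1 - v)]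

theorem one_div_add_abs_cube_div_six_le {k : ℕ} (hk : 3 ≤ k) {u : ℝ} (h0 : -(7 / 10) ≤ u)
    (h1 : u ≤ 1) :
    1 / k + |u| ^ 3 / 6 ≤ log (1 + u) + 1 / k * (1 - u) ^ k := by
  have hk3 : 1 / (k : ℝ) ≤ 1 / 3 := by gcongr; exact_mod_cast hk
  rcases le_total 0 u with hu | hu
  · have hpow : 1 / k * (1 - k * u + (k - 1) * u ^ 2) ≤ 1 / k * (1 - u) ^ k := by
      gcongr; exact one_sub_mul_add_sq_le_one_sub_pow h1 k
    have e : 1 / (k : ℝ) * (1 - k * u + (k - 1) * u ^ 2) = 1 / k - u + (1 - 1 / k) * u ^ 2 := by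
      field_simp
    rw [abs_of_nonneg hu]
    nlinarith [sub_sq_div_two_le_log_one_add hu, mul_le_mul_of_nonneg_right hk3 (sq_nonneg u),
      mul_nonneg (sq_nonneg u) (sub_nonneg.2 h1)]
  · have hpow : 1 / k * (1 + k * (-u + (-u) ^ 2 + (-u) ^ 3 / 3)) ≤ 1 / k * (1 - u) ^ k := by
      rw [sub_eq_add_neg]; gcongr
      exact one_add_mul_add_sq_add_cube_le_one_add_pow (by linarith) hk
    have e : 1 / (k : ℝ) * (1 + k * (-u + (-u) ^ 2 + (-u) ^ 3 / 3))
        = 1 / k - u + u ^ 2 - u ^ 3 / 3 := by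
      field_simp; ring
    have hlog := neg_add_sq_add_cube_le_log_one_sub (v := -u) (by linarith) (by linarith)
    rw [sub_neg_eq_add] at hlog
    rw [abs_of_nonpos hu]
    nlinarith

theorem one_add_sum_log_le_prod {ι : Type*} (s : Finset ι) {p : ι → ℝ}
    (hp : ∀ i ∈ s, 0 < p i) : 1 + ∑ i ∈ s, log (p i) ≤ ∏ i ∈ s, p i := by
  calc 1 + ∑ i ∈ s, log (p i) ≤ exp (∑ i ∈ s, log (p i)) := by
        linarith [add_one_le_exp (∑ i ∈ s, log (p i))]
    _ = ∏ i ∈ s, p i := by rw [exp_sum]; exact prod_congr rfl fun i hi => exp_log (hp i hi)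

noncomputable def bookSum (k : ℕ) (u : Fin k → ℝ) : ℝ :=
  ∏ i, (1 + u i) + 1 / k * ∑ i, (1 - u i) ^ k

theorem two_add_sum_abs_cube_le_bookSum {k : ℕ} (hk : 3 ≤ k) {u : Fin k → ℝ}
    (hu : ∀ i, u i ∈ Set.Icc (-(7 / 10)) 1) : 2 + ∑ i, |u i| ^ 3 / 6 ≤ bookSum k u := by
  have hprod := one_add_sum_log_le_prod univ fun i _ => (by linarith [(hu i).1] : 0 < 1 + u i)
  have hcoord :
      ∑ i, (1 / (k : ℝ) + |u i| ^ 3 / 6) ≤ ∑ i, (log (1 + u i) + 1 / k * (1 - u i) ^ k) :=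
    sum_le_sum fun i _ => one_div_add_abs_cube_div_six_le hk (hu i).1 (hu i).2
  have hk0 : (k : ℝ) ≠ 0 := by positivity
  simp only [sum_add_distrib, sum_const, card_univ, Fintype.card_fin, nsmul_eq_mul,
    mul_one_div_cancel hk0, ← mul_sum] at hcoord
  unfold bookSum
  linarith

theorem forty_one_div_twenty_mul_le_pow {k : ℕ} (hk : 4 ≤ k) :
    41 / 20 * (k : ℝ) ≤ (17 / 10) ^ k := by
  induction k, hk using Nat.le_induction with
  | base => norm_num
  | succ k hk ih =>
    have : (4 : ℝ) ≤ k := by exact_mod_cast hk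
    rw [pow_succ]; push_cast; nlinarith

theorem forty_one_div_twenty_le_bookSum_three {a b c : ℝ} (ha : a ∈ Set.Icc (-1) (-(7 / 10)))
    (hb : b ∈ Set.Icc (-1) 1) (hc : c ∈ Set.Icc (-1) 1) :
    41 / 20 ≤
      (1 + a) * (1 + b) * (1 + c) + 1 / 3 * ((1 - a) ^ 3 + (1 - b) ^ 3 + (1 - c) ^ 3) := by
  obtain ⟨ha, ha'⟩ := ha; obtain ⟨hb, hb'⟩ := hb; obtain ⟨hc, hc'⟩ := hc
  have pa : 0 ≤ 1 + a := by linarith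
  have pb : 0 ≤ 1 + b := by linarith
  have pc : 0 ≤ 1 + c := by linarith
  have qb : 0 ≤ 1 - b := by linarith
  have qc : 0 ≤ 1 - c := by linarith
  nlinarith [mul_nonneg (mul_nonneg pa pb) pc, sq_nonneg (b - c), sq_nonneg (b + c),
      mul_nonneg qb qc, sq_nonneg (b - 1 / 3), sq_nonneg (c - 1 / 3), sq_nonneg (a + 7 / 10),
      mul_nonneg (mul_nonneg qb qb) qc, mul_nonneg (mul_nonneg qc qc) qb]

theorem forty_one_div_twenty_le_bookSum {k : ℕ} (hk : 3 ≤ k) {u : Fin k → ℝ}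
    (hu : ∀ i, u i ∈ Set.Icc (-1) 1) {i : Fin k} (hi : u i < -(7 / 10)) :
    41 / 20 ≤ bookSum k u := by
  rcases hk.eq_or_lt with rfl | hk4
  · have h a b c (ha : u a ≤ -(7 / 10)) :=
      forty_one_div_twenty_le_bookSum_three ⟨(hu a).1, ha⟩ (hu b) (hu c)
    rw [bookSum, Fin.prod_univ_three, Fin.sum_univ_three]
    fin_cases i
    · linarith [h 0 1 2 hi.le]
    · linarith [h 1 0 2 hi.le]
    · linarith [h 2 0 1 hi.le]
  · have hprod : 0 ≤ ∏ i, (1 + u i) := prod_nonneg fun i _ => by linarith [(hu i).1]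
    have hsum : (17 / 10) ^ k ≤ ∑ i, (1 - u i) ^ k :=
      (pow_le_pow_left₀ (by norm_num) (by linarith : (17 / 10 : ℝ) ≤ 1 - u i) k).trans
        (single_le_sum (f := fun i => (1 - u i) ^ k)
          (fun i _ => pow_nonneg (by linarith [(hu i).2]) k) (mem_univ i))
    have hpow : 41 / 20 ≤ 1 / (k : ℝ) * (17 / 10) ^ k := by
      rw [one_div_mul_eq_div, le_div_iff₀ (by positivity)]; exact forty_one_div_twenty_mul_le_pow hk4
    unfold bookSum
    linarith [mul_le_mul_of_nonneg_left hsum (by positivity : (0 : ℝ) ≤ 1 / k)]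

theorem two_add_abs_cube_le_bookSum {k : ℕ} (hk : 3 ≤ k) {u : Fin k → ℝ}
    (hu : ∀ i, u i ∈ Set.Icc (-1) 1) (j : Fin k) : 2 + |u j| ^ 3 / 20 ≤ bookSum k u := by
  have hj : |u j| ^ 3 ≤ 1 := pow_le_one₀ (abs_nonneg _) (abs_le.2 (hu j))
  by_cases h : ∀ i, -(7 / 10) ≤ u i
  · have hsum := two_add_sum_abs_cube_le_bookSum hk fun i => ⟨h i, (hu i).2⟩
    have hsingle : |u j| ^ 3 / 6 ≤ ∑ i, |u i| ^ 3 / 6 :=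
      single_le_sum (f := fun i => |u i| ^ 3 / 6) (fun i _ => by positivity) (mem_univ j)
    linarith [pow_nonneg (abs_nonneg (u j)) 3]
  · simp only [not_forall, not_le] at h
    obtain ⟨i, hi⟩ := h
    linarith [forty_one_div_twenty_le_bookSum hk hu hi]

theorem bookSum_two_mul_sub_one (k : ℕ) (x : Fin k → ℝ) :
    bookSum k (fun i => 2 * x i - 1) = 2 ^ k * (∏ i, x i + 1 / k * ∑ i, (1 - x i) ^ k) := by
  have h1 : ∀ i, 1 + (2 * x i - 1) = 2 * x i := fun i => by ring
  have h2 : ∀ i, (1 - (2 * x i - 1)) ^ k = 2 ^ k * (1 - x i) ^ k := fun i => by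
    rw [← mul_pow]; ring
  simp only [bookSum, h1, h2, prod_mul_distrib, prod_const, card_univ, Fintype.card_fin,
    ← mul_sum]
  ring

/-- Stability version of the book inequality: for `k ≥ 3`, if some `x_j` is at distance
at least `ε₀` from `1/2`, then `∏ xᵢ + (1/k) ∑ (1 − xᵢ)^k` exceeds `2^(1−k)` by some
`δ₀ > 0` depending only on `k` and `ε₀`. -/
theorem stable_xi_inequality (k : ℕ) (hk : 3 ≤ k) (ε₀ : ℝ) (hε₀ : 0 < ε₀) :
    ∃ δ₀ : ℝ, 0 < δ₀ ∧
      ∀ x : Fin k → ℝ, (∀ i, x i ∈ Set.Icc (0 : ℝ) 1) →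
        (∃ j, ε₀ ≤ |x j - 1 / 2|) →
        (2 : ℝ) ^ (1 - (k : ℤ)) + δ₀ ≤ ∏ i, x i + (1 / (k : ℝ)) * ∑ i, (1 - x i) ^ k := by
  refine ⟨(2 * ε₀) ^ 3 / 20 / 2 ^ k, by positivity, ?_⟩
  rintro x hx ⟨j, hj⟩
  have hu : ∀ i, 2 * x i - 1 ∈ Set.Icc (-1) 1 := fun i =>
    ⟨by linarith [(hx i).1], by linarith [(hx i).2]⟩
  have key := two_add_abs_cube_le_bookSum hk hu j
  rw [bookSum_two_mul_sub_one] at key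
  have huj : 2 * ε₀ ≤ |2 * x j - 1| := by
    rw [show 2 * x j - 1 = 2 * (x j - 1 / 2) by ring, abs_mul, abs_two]; linarith
  have hcube : (2 * ε₀) ^ 3 ≤ |2 * x j - 1| ^ 3 := pow_le_pow_left₀ (by positivity) huj 3
  rw [zpow_sub₀ two_ne_zero, zpow_one, zpow_natCast, ← add_div, div_le_iff₀ (by positivity)]
  linarith
end
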